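/- arXiv:2404.16610 — 10 statements merged into one kernel-verified Lean document; each statement's English description precedes it below -/
import Mathlib

section
/- Let n ≥ 1 and let s_{n+1}, ..., s_{2n+1} be real-valued random variables on a probability space whose joint distribution is exchangeable (invariant under every permutation of the indices n+1, ..., 2n+1). Define the marginal conformal p-value p = (1 + #{i ∈ {n+1,...,2n} : s_i ≤ s_{2n+1}})/(n+1). Then for every t ∈ [0,1], P(p ≤ t) ≤ t. -/
/-!
Let `r_j` be the number of scores that are at most `s_j` (counting `s_j` itself), so that
`p = r_test / (n+1)`. For any threshold `c ≥ 0`, at most `c` indices `j` can have `r_j ≤ c`: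
they all lie weakly below the largest of them, whose rank counts them all. Summing over `j`,
`∑_j P(r_j ≤ c) ≤ c`, and by exchangeability all `n+1` summands equal `P(r_test ≤ c)`.
With `c = t (n+1)` this is `P(p ≤ t) ≤ t`.
-/

open MeasureTheory Finset ENNReal

namespace ConformalPrediction

variable {ι α Ω : Type*}

section Rank

variable [Fintype ι] [LinearOrder α]

def rank (v : ι → α) (j : ι) : ℕ := #{i | v i ≤ v j}

lemma rank_comp_perm (v : ι → α) (σ : Equiv.Perm ι) (j : ι) :
    rank (v ∘ σ) j = rank v (σ j) := by
  simp only [rank, card_filter, Function.comp_apply]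
  exact Equiv.sum_comp σ fun i => if v i ≤ v (σ j) then 1 else 0

lemma card_rank_le_le (v : ι → α) {c : ℝ} (hc : 0 ≤ c) :
    (#{j | (rank v j : ℝ) ≤ c} : ℝ) ≤ c := by
  set S : Finset ι := {j | (rank v j : ℝ) ≤ c}
  rcases S.eq_empty_or_nonempty with hS | hS
  · simpa [hS] using hc
  · obtain ⟨j, hjS, hmax⟩ := S.exists_max_image v hS
    have hsub : S ⊆ ({i | v i ≤ v j} : Finset ι) := fun i hi =>
      mem_filter.2 ⟨mem_univ i, hmax i hi⟩
    calc (#S : ℝ) ≤ rank v j := by exact_mod_cast card_le_card hsub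
      _ ≤ c := (mem_filter.1 hjS).2

lemma rank_last {n : ℕ} (v : Fin (n + 1) → α) :
    rank v (Fin.last n) = #{i : Fin n | v i.castSucc ≤ v (Fin.last n)} + 1 := by
  rw [rank, card_filter, Fin.sum_univ_castSucc, if_pos le_rfl, card_filter]

lemma measurable_rank [MeasurableSpace α] [TopologicalSpace α] [OrderClosedTopology α]
    [OpensMeasurableSpace α] [SecondCountableTopology α] (j : ι) :
    Measurable fun v : ι → α => rank v j := by
  simp only [rank, card_filter]
  exact Finset.measurable_sum _ fun i _ => Measurable.ite
    (measurableSet_le (measurable_pi_apply i) (measurable_pi_apply j))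
    measurable_const measurable_const

lemma measurableSet_rank_le [MeasurableSpace α] [TopologicalSpace α] [OrderClosedTopology α]
    [OpensMeasurableSpace α] [SecondCountableTopology α] (j : ι) (c : ℝ) :
    MeasurableSet {v : ι → α | (rank v j : ℝ) ≤ c} :=
  measurable_rank j (MeasurableSet.of_discrete (s := {m : ℕ | (m : ℝ) ≤ c}))

end Rank

open Classical in
lemma sum_measure_le_of_card_le [MeasurableSpace Ω] [Fintype ι] {μ : Measure Ω}
    {A : ι → Set Ω} (hA : ∀ j, MeasurableSet (A j)) {m : ℝ≥0∞}
    (hm : ∀ ω, (#{j | ω ∈ A j} : ℝ≥0∞) ≤ m) :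
    ∑ j, μ (A j) ≤ m * μ Set.univ :=
  calc ∑ j, μ (A j) = ∫⁻ ω, ∑ j, (A j).indicator 1 ω ∂μ := by
        rw [lintegral_finsetSum _ fun j _ => measurable_one.indicator (hA j)]
        simp only [lintegral_indicator_one (hA _)]
    _ = ∫⁻ ω, (#{j | ω ∈ A j} : ℝ≥0∞) ∂μ := by
        congr 1 with ω
        simp only [card_filter, Set.indicator_apply, Pi.one_apply, Nat.cast_sum, Nat.cast_ite,
          Nat.cast_one, Nat.cast_zero]
    _ ≤ ∫⁻ _, m ∂μ := lintegral_mono hm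
    _ = m * μ Set.univ := lintegral_const m

variable [MeasurableSpace Ω] [MeasurableSpace α]

def Exchangeable (X : Ω → ι → α) (μ : Measure Ω) : Prop :=
  ∀ σ : Equiv.Perm ι, μ.map (fun ω => X ω ∘ σ) = μ.map X

namespace Exchangeable

variable {X : Ω → ι → α} {μ : Measure Ω}

lemma measure_comp_perm_preimage (hexch : Exchangeable X μ) (hX : Measurable X)
    (σ : Equiv.Perm ι) {S : Set (ι → α)} (hS : MeasurableSet S) :
    μ ((fun ω => X ω ∘ σ) ⁻¹' S) = μ (X ⁻¹' S) := by
  have hXσ : Measurable fun ω => X ω ∘ σ :=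
    measurable_pi_lambda _ fun i => (measurable_pi_apply (σ i)).comp hX
  rw [← Measure.map_apply hXσ hS, hexch σ, Measure.map_apply hX hS]

variable [Fintype ι] [LinearOrder α] [TopologicalSpace α] [OrderClosedTopology α]
  [OpensMeasurableSpace α] [SecondCountableTopology α]

lemma measure_rank_le_eq (hexch : Exchangeable X μ) (hX : Measurable X) (i j : ι) (c : ℝ) :
    μ {ω | (rank (X ω) i : ℝ) ≤ c} = μ {ω | (rank (X ω) j : ℝ) ≤ c} := by
  classical
  have := hexch.measure_comp_perm_preimage hX (Equiv.swap i j) (measurableSet_rank_le i c)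
  simpa only [Set.preimage_ofPred_eq, rank_comp_perm, Equiv.swap_apply_left] using this.symm

theorem measure_rank_le_le [IsProbabilityMeasure μ] [Nonempty ι] (hexch : Exchangeable X μ)
    (hX : Measurable X) (j : ι) {c : ℝ} (hc : 0 ≤ c) :
    μ {ω | (rank (X ω) j : ℝ) ≤ c} ≤ ENNReal.ofReal (c / Fintype.card ι) := by
  have hsum : ∑ i, μ {ω | (rank (X ω) i : ℝ) ≤ c} ≤ ENNReal.ofReal c := by
    simpa using sum_measure_le_of_card_le (μ := μ)
      (fun i => hX (measurableSet_rank_le i c))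
      fun ω => by
        rw [← ENNReal.ofReal_natCast]
        exact ENNReal.ofReal_le_ofReal (card_rank_le_le (X ω) hc)
  rw [Finset.sum_congr rfl fun i _ => hexch.measure_rank_le_eq hX i j c, sum_const, card_univ,
    nsmul_eq_mul] at hsum
  rw [ENNReal.ofReal_div_of_pos (by positivity), ofReal_natCast,
    ENNReal.le_div_iff_mul_le (by simp) (by simp), mul_comm]
  exact hsum

end Exchangeable

end ConformalPrediction

open ConformalPrediction

theorem marginal_conformal_pvalue_valid_general
    {Ω : Type*} [MeasurableSpace Ω] (P : Measure Ω) [IsProbabilityMeasure P]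
    (n : ℕ)
    (s : Fin (n + 1) → Ω → ℝ)
    (hmeas : ∀ i, Measurable (s i))
    (hexch : ∀ σ : Equiv.Perm (Fin (n + 1)),
      Measure.map (fun ω i => s (σ i) ω) P = Measure.map (fun ω i => s i ω) P)
    (p : Ω → ℝ)
    (hp : ∀ ω, p ω =
      (((Finset.univ.filter
          (fun i : Fin n => s i.castSucc ω ≤ s (Fin.last n) ω)).card : ℝ) + 1) / (n + 1))
    (t : ℝ) (ht : t ∈ Set.Icc (0 : ℝ) 1) :
    P {ω | p ω ≤ t} ≤ ENNReal.ofReal t := by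
  obtain ⟨ht0, -⟩ := ht
  set X : Ω → Fin (n + 1) → ℝ := fun ω i => s i ω
  have hX : Measurable X := measurable_pi_lambda _ hmeas
  have hexch : Exchangeable X P := hexch
  have hevent : {ω | p ω ≤ t} = {ω | (rank (X ω) (Fin.last n) : ℝ) ≤ t * (n + 1)} := by
    ext ω
    rw [Set.mem_ofPred_eq, Set.mem_ofPred_eq, hp, rank_last, div_le_iff₀ (by positivity)]
    push_cast
    rfl
  calc P {ω | p ω ≤ t}
      ≤ ENNReal.ofReal (t * (n + 1) / Fintype.card (Fin (n + 1))) := by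
        rw [hevent]
        exact Exchangeable.measure_rank_le_le hexch hX _ (by positivity)
    _ = ENNReal.ofReal t := by
        rw [Fintype.card_fin]
        push_cast
        field_simp

/-- validity of the marginal conformal p-value: for exchangeable scores
`s_{n+1}, ..., s_{2n+1}` (indexed here by `Fin (n+1)`, the last index being the test score),
the marginal conformal p-value `p = (1 + #{i ≤ n calibration : s_i ≤ s_test})/(n+1)`
satisfies `P(p ≤ t) ≤ t` for all `t ∈ [0,1]`. -/
theorem marginal_conformal_pvalue_valid
    {Ω : Type*} [MeasurableSpace Ω] (P : Measure Ω) [IsProbabilityMeasure P]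
    (n : ℕ) (hn : 1 ≤ n)
    (s : Fin (n + 1) → Ω → ℝ)
    (hmeas : ∀ i, Measurable (s i))
    (hexch : ∀ σ : Equiv.Perm (Fin (n + 1)),
      Measure.map (fun ω i => s (σ i) ω) P = Measure.map (fun ω i => s i ω) P)
    (p : Ω → ℝ)
    (hp : ∀ ω, p ω =
      (((Finset.univ.filter
          (fun i : Fin n => s i.castSucc ω ≤ s (Fin.last n) ω)).card : ℝ) + 1) / (n + 1))
    (t : ℝ) (ht : t ∈ Set.Icc (0 : ℝ) 1) :
    P {ω | p ω ≤ t} ≤ ENNReal.ofReal t :=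
  marginal_conformal_pvalue_valid_general P n s hmeas hexch p hp t ht
end

section
/- Let m ≥ 1 and let s_1, ..., s_{m+1} be real-valued random variables on a probability space whose joint distribution is exchangeable. Let v_1, ..., v_{m+1} be fixed real numbers whose distinct values arranged increasingly are ṽ_1 < ... < ṽ_k with multiplicities n_1, ..., n_k, let E_v be the event that the multiset {s_1,...,s_{m+1}} equals {v_1,...,v_{m+1}}, and suppose P(E_v) > 0. Define p = (1 + #{j ∈ {1,...,m} : s_j ≤ s_{m+1}})/(m+1). Then for every i ∈ {1,...,k} and every t with (Σ_{l=1}^{i-1} n_l)/(m+1) ≤ t < (Σ_{l=1}^{i} n_l)/(m+1), the conditional probability P(p ≤ t | E_v) = (Σ_{l=1}^{i-1} n_l)/(m+1), and in particular P(p ≤ t | E_v) ≤ t. -/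
/-!
On the event `E_v` the scores are a rearrangement of `v`, so `(m + 1) p` is the number of
`v_j ≤ s_{m+1}`; for `t` in the given window this gives `p ≤ t ↔ s_{m+1} < ṽ_i`. Swapping the
coordinates `r` and `m + 1` preserves both the law of the scores and `E_v`, so
`P(E_v ∩ {s_r < ṽ_i})` does not depend on `r`. Summed over `r`, these probabilities add up to
the expectation of `#{r | s_r < ṽ_i}` on `E_v`, where this count is the constant `∑_{l<i} n_l`.
-/

open MeasureTheory ProbabilityTheory Finset
open scoped ENNReal

section Counting

variable {ι κ α : Type*} [Fintype ι]

theorem Fin.card_filter_univ_castSucc {n : ℕ} (p : Fin (n + 1) → Prop) [DecidablePred p] :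
    #{j | p j} = #{j : Fin n | p j.castSucc} + if p (Fin.last n) then 1 else 0 := by
  simp only [card_filter, Fin.sum_univ_castSucc]

theorem Multiset.map_univ_val_comp_perm (x : ι → α) (σ : Equiv.Perm ι) :
    univ.val.map (x ∘ σ) = univ.val.map x := by
  rw [← Multiset.map_map, Multiset.map_univ_val_equiv]

theorem card_filter_eq_of_map_univ_val_eq {x v : ι → α} (h : univ.val.map x = univ.val.map v)
    (q : α → Prop) [DecidablePred q] : #{j | q (x j)} = #{j | q (v j)} := by
  have hcount : ∀ f : ι → α, #{j | q (f j)} = (univ.val.map f).countP q :=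
    fun f => (Multiset.countP_map f univ.val q).symm
  rw [hcount, hcount, h]

theorem card_filter_eq_sum_card_fiber [DecidableEq ι] [Fintype κ] [DecidableEq α]
    {v : ι → α} {w : κ → α} (hw : Function.Injective w) (hv : ∀ j, v j ∈ Set.range w)
    (q : α → Prop) [DecidablePred q] :
    #{j | q (v j)} = ∑ l with q (w l), #{j | v j = w l} := by
  rw [← card_biUnion]
  · congr 1
    ext j
    obtain ⟨l, hl⟩ := hv j
    simp only [mem_filter, mem_univ, true_and, mem_biUnion]
    exact ⟨fun hq => ⟨l, hl ▸ hq, hl.symm⟩, fun ⟨_, hq, he⟩ => he ▸ hq⟩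
  · intro a _ b _ hab
    exact disjoint_filter.2 fun j _ ha hb => hab (hw (ha.symm.trans hb))

theorem card_filter_lt_eq_sum_Iio [DecidableEq ι] [Fintype κ] [LinearOrder κ]
    [LocallyFiniteOrderBot κ] [LinearOrder α] {v : ι → α} {w : κ → α} (hw : StrictMono w)
    (hv : ∀ j, v j ∈ Set.range w) (i : κ) :
    #{j | v j < w i} = ∑ l ∈ Iio i, #{j | v j = w l} := by
  rw [card_filter_eq_sum_card_fiber hw.injective hv (· < w i)]
  simp only [hw.lt_iff_lt, filter_gt_eq_Iio]

theorem card_filter_le_eq_sum_Iic [DecidableEq ι] [Fintype κ] [LinearOrder κ]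
    [LocallyFiniteOrderBot κ] [LinearOrder α] {v : ι → α} {w : κ → α} (hw : StrictMono w)
    (hv : ∀ j, v j ∈ Set.range w) (i : κ) :
    #{j | v j ≤ w i} = ∑ l ∈ Iic i, #{j | v j = w l} := by
  rw [card_filter_eq_sum_card_fiber hw.injective hv (· ≤ w i)]
  simp only [hw.le_iff_le, filter_ge_eq_Iic]

theorem measurableSet_map_univ_val_eq [MeasurableSpace α] [MeasurableSingletonClass α]
    (v : ι → α) : MeasurableSet {x : ι → α | univ.val.map x = univ.val.map v} := by
  refine ((Set.Finite.pi fun _ => Set.finite_range v).subset ?_).measurableSet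
  intro x hx j _
  have hxj : x j ∈ univ.val.map v := hx ▸ Multiset.mem_map_of_mem x (mem_univ j)
  simpa using hxj

end Counting

section ConformalPValue

variable {m : ℕ}

noncomputable def conformalPValue (x : Fin (m + 1) → ℝ) : ℝ :=
  ((#{j : Fin m | x j.castSucc ≤ x (Fin.last m)} : ℝ) + 1) / (m + 1)

theorem conformalPValue_eq_of_map_univ_val_eq {x v : Fin (m + 1) → ℝ}
    (h : univ.val.map x = univ.val.map v) :
    conformalPValue x = #{j | v j ≤ x (Fin.last m)} / (m + 1) := by
  have hcard := Fin.card_filter_univ_castSucc (fun j => x j ≤ x (Fin.last m))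
  rw [if_pos le_rfl, card_filter_eq_of_map_univ_val_eq h (· ≤ x (Fin.last m))] at hcard
  rw [conformalPValue, hcard]
  push_cast
  rfl

theorem conformalPValue_le_iff {x v : Fin (m + 1) → ℝ} (h : univ.val.map x = univ.val.map v)
    {c t : ℝ} (hc_lt : (#{j | v j < c} : ℝ) / (m + 1) ≤ t)
    (hc_le : t < (#{j | v j ≤ c} : ℝ) / (m + 1)) :
    conformalPValue x ≤ t ↔ x (Fin.last m) < c := by
  rw [conformalPValue_eq_of_map_univ_val_eq h]
  refine ⟨fun hp => ?_, fun hc => le_trans (by gcongr) hc_lt⟩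
  by_contra! hc
  exact hp.not_gt (hc_le.trans_le (by gcongr))

end ConformalPValue

section Exchangeable

variable {Ω ι α : Type*} [MeasurableSpace Ω] [MeasurableSpace α]
  {P : Measure Ω} {X : Ω → ι → α} {S : Set (ι → α)} {T : Set α}

theorem measure_inter_coord_mem_eq_of_exchangeable [DecidableEq ι] (hX : Measurable X)
    (hexch : ∀ σ : Equiv.Perm ι, P.map (fun ω => X ω ∘ σ) = P.map X)
    (hS : MeasurableSet S) (hSperm : ∀ (σ : Equiv.Perm ι) (x : ι → α), x ∘ σ ∈ S ↔ x ∈ S)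
    (hT : MeasurableSet T) (i j : ι) :
    P (X ⁻¹' (S ∩ {x | x i ∈ T})) = P (X ⁻¹' (S ∩ {x | x j ∈ T})) := by
  have hB : MeasurableSet (S ∩ {x : ι → α | x j ∈ T}) := hS.inter (measurable_pi_apply j hT)
  have hpre : (fun ω => X ω ∘ Equiv.swap i j) ⁻¹' (S ∩ {x | x j ∈ T})
      = X ⁻¹' (S ∩ {x | x i ∈ T}) := by
    ext ω
    simp [hSperm]
  rw [← hpre, ← Measure.map_apply (by fun_prop) hB, hexch, Measure.map_apply hX hB]

theorem card_mul_measure_inter_coord_mem_of_exchangeable [Fintype ι] [DecidableEq ι]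
    (hX : Measurable X)
    (hexch : ∀ σ : Equiv.Perm ι, P.map (fun ω => X ω ∘ σ) = P.map X)
    (hS : MeasurableSet S) (hSperm : ∀ (σ : Equiv.Perm ι) (x : ι → α), x ∘ σ ∈ S ↔ x ∈ S)
    (hT : MeasurableSet T) [DecidablePred (· ∈ T)] {N : ℕ} (hN : ∀ x ∈ S, #{i | x i ∈ T} = N)
    (j : ι) :
    Fintype.card ι * P (X ⁻¹' (S ∩ {x | x j ∈ T})) = N * P (X ⁻¹' S) := by
  have hmeas : ∀ i, MeasurableSet (X ⁻¹' (S ∩ {x | x i ∈ T})) :=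
    fun i => hX (hS.inter (measurable_pi_apply i hT))
  have hcount : ∀ ω, ∑ i, (X ⁻¹' (S ∩ {x | x i ∈ T})).indicator 1 ω
      = (X ⁻¹' S).indicator (fun _ => (N : ℝ≥0∞)) ω := by
    intro ω
    by_cases hω : X ω ∈ S
    · rw [Set.indicator_of_mem (show ω ∈ X ⁻¹' S from hω), ← hN _ hω, natCast_card_filter]
      refine sum_congr rfl fun i _ => ?_
      split_ifs with hi
      · exact Set.indicator_of_mem (show ω ∈ X ⁻¹' (S ∩ {x | x i ∈ T}) from ⟨hω, hi⟩) _
      · exact Set.indicator_of_notMem (fun h => hi h.2) _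
    · rw [Set.indicator_of_notMem (show ω ∉ X ⁻¹' S from hω)]
      exact sum_eq_zero fun i _ => Set.indicator_of_notMem (fun h => hω h.1) _
  calc Fintype.card ι * P (X ⁻¹' (S ∩ {x | x j ∈ T}))
      = ∑ i, P (X ⁻¹' (S ∩ {x | x i ∈ T})) := by
        rw [sum_congr rfl fun i _ =>
            measure_inter_coord_mem_eq_of_exchangeable hX hexch hS hSperm hT i j,
          sum_const, card_univ, nsmul_eq_mul]
    _ = ∫⁻ ω, ∑ i, (X ⁻¹' (S ∩ {x | x i ∈ T})).indicator 1 ω ∂P := by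
        rw [lintegral_finsetSum _ fun i _ => measurable_one.indicator (hmeas i)]
        exact sum_congr rfl fun i _ => (lintegral_indicator_one (hmeas i)).symm
    _ = N * P (X ⁻¹' S) := by
        simp_rw [hcount]
        exact lintegral_indicator_const (hX hS) _

theorem cond_coord_mem_of_exchangeable [Fintype ι] [DecidableEq ι] [IsFiniteMeasure P]
    (hX : Measurable X)
    (hexch : ∀ σ : Equiv.Perm ι, P.map (fun ω => X ω ∘ σ) = P.map X)
    (hS : MeasurableSet S) (hSperm : ∀ (σ : Equiv.Perm ι) (x : ι → α), x ∘ σ ∈ S ↔ x ∈ S)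
    (hpos : P (X ⁻¹' S) ≠ 0)
    (hT : MeasurableSet T) [DecidablePred (· ∈ T)] {N : ℕ} (hN : ∀ x ∈ S, #{i | x i ∈ T} = N)
    (j : ι) :
    P[X ⁻¹' {x | x j ∈ T} | X ⁻¹' S] = N / Fintype.card ι := by
  have hcard : (Fintype.card ι : ℝ≥0∞) ≠ 0 :=
    Nat.cast_ne_zero.2 (Fintype.card_pos_iff.2 ⟨j⟩).ne'
  have hinter : P (X ⁻¹' (S ∩ {x | x j ∈ T})) = N * P (X ⁻¹' S) / Fintype.card ι :=
    (ENNReal.eq_div_iff hcard (ENNReal.natCast_ne_top _)).2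
      (card_mul_measure_inter_coord_mem_of_exchangeable hX hexch hS hSperm hT hN j)
  rw [cond_apply (hX hS), ← Set.preimage_inter, hinter, div_eq_mul_inv, div_eq_mul_inv]
  calc (P (X ⁻¹' S))⁻¹ * (N * P (X ⁻¹' S) * (Fintype.card ι : ℝ≥0∞)⁻¹)
      = N * ((P (X ⁻¹' S))⁻¹ * P (X ⁻¹' S)) * (Fintype.card ι : ℝ≥0∞)⁻¹ := by ring
    _ = N * (Fintype.card ι : ℝ≥0∞)⁻¹ := by
        rw [ENNReal.inv_mul_cancel hpos (measure_ne_top _ _), mul_one]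

end Exchangeable

theorem conditional_pvalue_cdf_general
    {Ω : Type*} [MeasurableSpace Ω] (P : Measure Ω) [IsProbabilityMeasure P]
    (m : ℕ)
    (s : Fin (m + 1) → Ω → ℝ)
    (hmeas : ∀ i, Measurable (s i))
    (hexch : ∀ σ : Equiv.Perm (Fin (m + 1)),
      Measure.map (fun ω i => s (σ i) ω) P = Measure.map (fun ω i => s i ω) P)
    (v : Fin (m + 1) → ℝ)
    (k : ℕ) (vt : Fin k → ℝ) (hmono : StrictMono vt)
    (hrange : Set.range v = Set.range vt)
    (nl : Fin k → ℕ)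
    (hnl : ∀ l, nl l = (Finset.univ.filter (fun j : Fin (m + 1) => v j = vt l)).card)
    (E : Set Ω)
    (hE : E = {ω | Multiset.map (fun j => s j ω) Finset.univ.val
                    = Multiset.map v Finset.univ.val})
    (hpos : 0 < P E)
    (p : Ω → ℝ)
    (hp : ∀ ω, p ω =
      (((Finset.univ.filter
          (fun j : Fin m => s j.castSucc ω ≤ s (Fin.last m) ω)).card : ℝ) + 1) / (m + 1))
    (i : Fin k) (t : ℝ)
    (ht1 : ((∑ l ∈ Finset.Iio i, nl l : ℕ) : ℝ) / (m + 1) ≤ t)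
    (ht2 : t < ((∑ l ∈ Finset.Iic i, nl l : ℕ) : ℝ) / (m + 1)) :
    P[|E] {ω | p ω ≤ t}
        = ENNReal.ofReal (((∑ l ∈ Finset.Iio i, nl l : ℕ) : ℝ) / (m + 1)) ∧
      P[|E] {ω | p ω ≤ t} ≤ ENNReal.ofReal t := by
  have hv : ∀ j, v j ∈ Set.range vt := fun j => hrange ▸ Set.mem_range_self j
  set X : Ω → Fin (m + 1) → ℝ := fun ω j => s j ω
  set A := {x : Fin (m + 1) → ℝ | univ.val.map x = univ.val.map v}
  have hE' : E = X ⁻¹' A := hE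
  have hX : Measurable X := measurable_pi_lambda _ hmeas
  have hA : MeasurableSet A := measurableSet_map_univ_val_eq v
  have hlt : #{j | v j < vt i} = ∑ l ∈ Iio i, nl l := by
    simp only [hnl]
    exact card_filter_lt_eq_sum_Iio hmono hv i
  have hle : #{j | v j ≤ vt i} = ∑ l ∈ Iic i, nl l := by
    simp only [hnl]
    exact card_filter_le_eq_sum_Iic hmono hv i
  have hcond : P[|E] {ω | p ω ≤ t}
      = P[X ⁻¹' {x | x (Fin.last m) ∈ Set.Iio (vt i)} | X ⁻¹' A] := by
    rw [hE', ← cond_inter_self (hX hA), ← cond_inter_self (hX hA) (X ⁻¹' _)]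
    congr 1
    ext ω
    refine and_congr_right fun hω => ?_
    rw [Set.mem_ofPred_eq, hp]
    exact conformalPValue_le_iff hω (by rwa [hlt]) (by rwa [hle])
  have hN : ∀ x ∈ A, #{j | x j ∈ Set.Iio (vt i)} = ∑ l ∈ Iio i, nl l := fun x hx => by
    rw [← hlt]
    exact card_filter_eq_of_map_univ_val_eq hx (· < vt i)
  have hvalue :
      P[|E] {ω | p ω ≤ t} = ENNReal.ofReal (((∑ l ∈ Iio i, nl l : ℕ) : ℝ) / (m + 1)) := by
    rw [hcond, cond_coord_mem_of_exchangeable hX hexch hA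
      (fun σ x => by simp only [A, Set.mem_ofPred_eq, Multiset.map_univ_val_comp_perm])
      (hE' ▸ hpos.ne') measurableSet_Iio hN, ENNReal.ofReal_div_of_pos (by positivity),
      ENNReal.ofReal_natCast, Fintype.card_fin, ← Nat.cast_add_one, ENNReal.ofReal_natCast]
  exact ⟨hvalue, hvalue ▸ ENNReal.ofReal_le_ofReal ht1⟩

/-- conditional distribution computation in the proof of Proposition 1.
Conditionally on the event `E_v` fixing the multiset of exchangeable score values (with
distinct values `ṽ_1 < ... < ṽ_k` of multiplicities `nl`), for every `i` and every `t` with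
`(∑_{l<i} nl l)/(m+1) ≤ t < (∑_{l≤i} nl l)/(m+1)`, the conformal p-value `p` satisfies
`P(p ≤ t | E_v) = (∑_{l<i} nl l)/(m+1) ≤ t`. -/
theorem conditional_pvalue_cdf
    {Ω : Type*} [MeasurableSpace Ω] (P : Measure Ω) [IsProbabilityMeasure P]
    (m : ℕ) (hm : 1 ≤ m)
    (s : Fin (m + 1) → Ω → ℝ)
    (hmeas : ∀ i, Measurable (s i))
    (hexch : ∀ σ : Equiv.Perm (Fin (m + 1)),
      Measure.map (fun ω i => s (σ i) ω) P = Measure.map (fun ω i => s i ω) P)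
    (v : Fin (m + 1) → ℝ)
    (k : ℕ) (hk : 1 ≤ k) (vt : Fin k → ℝ) (hmono : StrictMono vt)
    (hrange : Set.range v = Set.range vt)
    (nl : Fin k → ℕ)
    (hnl : ∀ l, nl l = (Finset.univ.filter (fun j : Fin (m + 1) => v j = vt l)).card)
    (hsum : ∑ l, nl l = m + 1)
    (E : Set Ω)
    (hE : E = {ω | Multiset.map (fun j => s j ω) Finset.univ.val
                    = Multiset.map v Finset.univ.val})
    (hpos : 0 < P E)
    (p : Ω → ℝ)
    (hp : ∀ ω, p ω =
      (((Finset.univ.filter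
          (fun j : Fin m => s j.castSucc ω ≤ s (Fin.last m) ω)).card : ℝ) + 1) / (m + 1))
    (i : Fin k) (t : ℝ)
    (ht1 : ((∑ l ∈ Finset.Iio i, nl l : ℕ) : ℝ) / (m + 1) ≤ t)
    (ht2 : t < ((∑ l ∈ Finset.Iic i, nl l : ℕ) : ℝ) / (m + 1)) :
    P[|E] {ω | p ω ≤ t}
        = ENNReal.ofReal (((∑ l ∈ Finset.Iio i, nl l : ℕ) : ℝ) / (m + 1)) ∧
      P[|E] {ω | p ω ≤ t} ≤ ENNReal.ofReal t :=
  conditional_pvalue_cdf_general P m s hmeas hexch v k vt hmono hrange nl hnl E hE hpos p hp i t ht1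
    ht2
end

section
/- Let n ≥ 1, let 𝒴 be a finite nonempty set of labels, and let (X_i, Y_i), i = 1, ..., 2n+1, be random variables with values in a measurable space 𝒳 × 𝒴 whose joint distribution is exchangeable (invariant under every permutation of the indices 1, ..., 2n+1). Fix a measurable score function s : 𝒳 × 𝒴 → ℝ. For y ∈ 𝒴, let I_y = {i ∈ {n+1,...,2n} : Y_i = y}, n_y = |I_y|, and define the conditional conformal p-value p(X_{2n+1}|y) = (Σ_{i ∈ I_y} 1{s(X_i, y) ≤ s(X_{2n+1}, y)} + 1)/(n_y + 1). Then for every y ∈ 𝒴, every subset I ⊆ {n+1,...,2n}, and every t ∈ [0,1], if the event {I_y = I, Y_{2n+1} = y} has positive probability, then P(p(X_{2n+1}|y) ≤ t | I_y = I, Y_{2n+1} = y) ≤ t. -/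
/-!
On the event `{I_y = I, Y_{2n+1} = y}` the p-value is `R / (|I| + 1)`, where `R` is the rank of
the test score among the scores indexed by `K = I ∪ {2n+1}`. The event only constrains which labels
equal `y`, so it is invariant under every transposition of two indices of `K`; together with
exchangeability, the conditional law of the data is invariant under these transpositions, and `R`
has the same conditional law as the rank of any other `j ∈ K`. Since at most `k` elements of `K`
have rank `≤ k`, averaging over `j ∈ K` gives `P(R ≤ k | event) ≤ k / |K|`; take `k = ⌊t |K|⌋`.
-/

open MeasureTheory ProbabilityTheory Finset
open scoped ENNReal

def scoreRank {ι β : Type*} [LinearOrder β] (K : Finset ι) (f : ι → β) (j : ι) : ℕ :=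
  #{i ∈ K | f i ≤ f j}

section Rank

variable {ι β : Type*} [LinearOrder β]

theorem card_filter_scoreRank_le (K : Finset ι) (f : ι → β) (k : ℕ) :
    #{j ∈ K | scoreRank K f j ≤ k} ≤ k := by
  set A := {j ∈ K | scoreRank K f j ≤ k}
  obtain hA | hA := A.eq_empty_or_nonempty
  · simp [hA]
  -- the element of `A` with the largest score has rank at least `#A`
  obtain ⟨j, hjA, hmax⟩ := A.exists_max_image f hA
  calc #A ≤ scoreRank K f j :=
        card_le_card fun i hi => mem_filter.2 ⟨(mem_filter.1 hi).1, hmax i hi⟩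
    _ ≤ k := (mem_filter.1 hjA).2

theorem scoreRank_comp_perm {K : Finset ι} (f : ι → β) {σ : Equiv.Perm ι}
    (hσ : ∀ i, σ i ∈ K ↔ i ∈ K) (j : ι) : scoreRank K (f ∘ σ) j = scoreRank K f (σ j) :=
  card_nbij' σ σ.symm (fun i hi => by simp_all) (fun i hi => by simp_all [← hσ (σ.symm i)])
    (fun i _ => σ.symm_apply_apply i) (fun i _ => σ.apply_symm_apply i)

theorem scoreRank_insert_self [DecidableEq ι] {K : Finset ι} {j : ι} (hj : j ∉ K) (f : ι → β) :
    scoreRank (insert j K) f j = #{i ∈ K | f i ≤ f j} + 1 := by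
  rw [scoreRank, filter_insert, if_pos le_rfl,
    card_insert_of_notMem fun h => hj (mem_filter.1 h).1]

end Rank

theorem Equiv.swap_apply_mem_iff {α : Type*} [DecidableEq α] {s : Finset α} {a b : α}
    (ha : a ∈ s) (hb : b ∈ s) (x : α) : Equiv.swap a b x ∈ s ↔ x ∈ s := by
  rw [Equiv.swap_apply_def]
  split_ifs <;> simp_all

theorem Finset.filter_eq_and_iff_forall_mem_insert {ι : Type*} [DecidableEq ι] {D I : Finset ι}
    {L : ι} (hI : I ⊆ D) (hL : L ∉ D) (q : ι → Prop) [DecidablePred q] :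
    D.filter q = I ∧ q L ↔ ∀ i ∈ insert L D, (q i ↔ i ∈ insert L I) := by
  have hI' : ∀ i ∈ I, i ∈ D := fun i hi => hI hi
  simp only [Finset.ext_iff, mem_filter, mem_insert]
  grind

section Pattern

variable {ι α : Type*}

def coordPattern (D K : Finset ι) (B : Set α) : Set (ι → α) :=
  {z | ∀ i ∈ D, (z i ∈ B ↔ i ∈ K)}

theorem measurableSet_coordPattern [MeasurableSpace α] {B : Set α} (hB : MeasurableSet B)
    (D K : Finset ι) : MeasurableSet (coordPattern D K B) := by
  simp only [coordPattern, Set.ofPred_forall]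
  refine Finset.measurableSet_biInter _ fun i _ => ?_
  have hi : Measurable fun z : ι → α => z i ∈ B :=
    (measurable_mem.2 hB).comp (measurable_pi_apply i)
  by_cases hiK : i ∈ K
  · simpa [hiK] using hi
  · simpa [hiK] using hi.not

theorem preimage_comp_perm_coordPattern (B : Set α) {D K : Finset ι} {σ : Equiv.Perm ι}
    (hD : ∀ i, σ i ∈ D ↔ i ∈ D) (hK : ∀ i, σ i ∈ K ↔ i ∈ K) :
    (fun z : ι → α => z ∘ σ) ⁻¹' coordPattern D K B = coordPattern D K B := by
  ext z
  simp only [coordPattern, Set.mem_preimage, Set.mem_ofPred_eq, Function.comp_apply]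
  conv_rhs => rw [← σ.forall_congr_right]
  simp [hD, hK]

end Pattern

section Conditioning

variable {Ω β : Type*} {mΩ : MeasurableSpace Ω} [MeasurableSpace β]

theorem cond_map {μ : Measure Ω} {X : Ω → β} (hX : Measurable X) {s : Set β}
    (hs : MeasurableSet s) : (μ.map X)[|s] = (μ[|X ⁻¹' s]).map X := by
  rw [ProbabilityTheory.cond, ProbabilityTheory.cond, Measure.map_smul,
    Measure.restrict_map hX hs, Measure.map_apply hX hs]

theorem map_cond_eq_self {μ : Measure Ω} {f : Ω → Ω} (hf : Measurable f) (hμ : μ.map f = μ)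
    {s : Set Ω} (hs : MeasurableSet s) (hfs : f ⁻¹' s = s) : (μ[|s]).map f = μ[|s] := by
  conv_lhs => rw [← hfs, ← cond_map hf hs, hμ]

end Conditioning

section Exchangeable

variable {ι α : Type*} [MeasurableSpace α]

theorem measurable_scoreRank {g : α → ℝ} (hg : Measurable g) (K : Finset ι) (j : ι) :
    Measurable fun z : ι → α => scoreRank K (fun i => g (z i)) j := by
  simp only [scoreRank, card_filter]
  exact Finset.measurable_sum _ fun i _ => Measurable.ite
    (measurableSet_le (hg.comp (measurable_pi_apply i)) (hg.comp (measurable_pi_apply j)))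
    measurable_const measurable_const

variable [DecidableEq ι]

theorem card_mul_measure_scoreRank_le {ν : Measure (ι → α)} {g : α → ℝ} (hg : Measurable g)
    {K : Finset ι} {L : ι} (hL : L ∈ K)
    (hν : ∀ j ∈ K, ν.map (fun z => z ∘ Equiv.swap j L) = ν) (k : ℕ) :
    #K * ν {z | scoreRank K (fun i => g (z i)) L ≤ k} ≤ k * ν Set.univ := by
  set A : ι → Set (ι → α) := fun j => {z | scoreRank K (fun i => g (z i)) j ≤ k}
  have hA : ∀ j, MeasurableSet (A j) := fun j =>
    measurableSet_le (measurable_scoreRank hg K j) measurable_const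
  have hAj : ∀ j ∈ K, ν (A j) = ν (A L) := by
    intro j hj
    have hswap := Equiv.swap_apply_mem_iff hj hL
    calc ν (A j) = ν ((fun z => z ∘ Equiv.swap j L) ⁻¹' A L) := by
          congr 1
          ext z
          change _ ≤ k ↔ scoreRank K ((fun i => g (z i)) ∘ Equiv.swap j L) L ≤ k
          rw [scoreRank_comp_perm _ hswap, Equiv.swap_apply_right]
      _ = ν (A L) := by rw [← Measure.map_apply (by fun_prop) (hA L), hν j hj]
  calc (#K : ℝ≥0∞) * ν (A L) = ∑ j ∈ K, ν (A j) := by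
        rw [sum_congr rfl hAj, sum_const, nsmul_eq_mul]
    _ = ∫⁻ z, ∑ j ∈ K, (A j).indicator 1 z ∂ν := by
        rw [lintegral_finsetSum _ fun j _ => measurable_one.indicator (hA j)]
        simp [lintegral_indicator_one (hA _)]
    _ ≤ ∫⁻ _, (k : ℝ≥0∞) ∂ν := lintegral_mono fun z => by
        simp only [Set.indicator_apply, Pi.one_apply, sum_boole]
        exact_mod_cast card_filter_scoreRank_le K (fun i => g (z i)) k
    _ = k * ν Set.univ := lintegral_const _

theorem measure_scoreRank_div_card_le {ν : Measure (ι → α)} {g : α → ℝ} (hg : Measurable g)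
    {K : Finset ι} {L : ι} (hL : L ∈ K)
    (hν : ∀ j ∈ K, ν.map (fun z => z ∘ Equiv.swap j L) = ν) {t : ℝ} (ht : 0 ≤ t) :
    ν {z | (scoreRank K (fun i => g (z i)) L : ℝ) / #K ≤ t} ≤ ENNReal.ofReal t * ν Set.univ := by
  have hK : (0 : ℝ) < #K := by exact_mod_cast card_pos.2 ⟨L, hL⟩
  set k := ⌊t * #K⌋₊
  have hset : {z : ι → α | (scoreRank K (fun i => g (z i)) L : ℝ) / #K ≤ t} =
      {z | scoreRank K (fun i => g (z i)) L ≤ k} := by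
    ext z
    rw [Set.mem_ofPred_eq, Set.mem_ofPred_eq, div_le_iff₀ hK, Nat.le_floor_iff (by positivity)]
  have hk : (k : ℝ≥0∞) ≤ #K * ENNReal.ofReal t := by
    rw [← ENNReal.ofReal_natCast, ← ENNReal.ofReal_natCast, ← ENNReal.ofReal_mul (by positivity),
      mul_comm]
    exact ENNReal.ofReal_le_ofReal (Nat.floor_le (by positivity))
  rw [hset, ← ENNReal.mul_le_mul_iff_right (Nat.cast_ne_zero.2 (card_ne_zero_of_mem hL))
    (ENNReal.natCast_ne_top _), ← mul_assoc]
  exact (card_mul_measure_scoreRank_le hg hL hν k).trans (mul_le_mul_left hk _)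

variable {μ : Measure (ι → α)} {B : Set α} {D K : Finset ι}

theorem map_comp_swap_cond_coordPattern (hμ : ∀ σ : Equiv.Perm ι, μ.map (· ∘ σ) = μ)
    (hB : MeasurableSet B) (hKD : K ⊆ D) {j L : ι} (hj : j ∈ K) (hL : L ∈ K) :
    (μ[|coordPattern D K B]).map (· ∘ Equiv.swap j L) = μ[|coordPattern D K B] :=
  map_cond_eq_self (by fun_prop) (hμ _) (measurableSet_coordPattern hB D K)
    (preimage_comp_perm_coordPattern B (Equiv.swap_apply_mem_iff (hKD hj) (hKD hL))
      (Equiv.swap_apply_mem_iff hj hL))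

theorem cond_coordPattern_scoreRank_div_card_le (hμ : ∀ σ : Equiv.Perm ι, μ.map (· ∘ σ) = μ)
    (hB : MeasurableSet B) (hKD : K ⊆ D) {L : ι} (hL : L ∈ K) {g : α → ℝ} (hg : Measurable g)
    {t : ℝ} (ht : 0 ≤ t) :
    μ[|coordPattern D K B] {z | (scoreRank K (fun i => g (z i)) L : ℝ) / #K ≤ t}
      ≤ ENNReal.ofReal t :=
  (measure_scoreRank_div_card_le hg hL
    (fun _ hj => map_comp_swap_cond_coordPattern hμ hB hKD hj hL) ht).trans
    (mul_le_of_le_one_right' prob_le_one)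

end Exchangeable

theorem conditional_conformal_pvalue_valid_general
    {Ω : Type*} [MeasurableSpace Ω] (P : Measure Ω)
    {𝒳 : Type*} [MeasurableSpace 𝒳]
    {𝒴 : Type*} [DecidableEq 𝒴]
    [MeasurableSpace 𝒴] [MeasurableSingletonClass 𝒴]
    (n : ℕ)
    (Z : Fin (2 * n + 1) → Ω → 𝒳 × 𝒴)
    (hmeas : ∀ i, Measurable (Z i))
    (hexch : ∀ σ : Equiv.Perm (Fin (2 * n + 1)),
      Measure.map (fun ω i => Z (σ i) ω) P = Measure.map (fun ω i => Z i ω) P)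
    (s : 𝒳 × 𝒴 → ℝ) (hs : Measurable s)
    (Dcal : Finset (Fin (2 * n + 1)))
    (hDcal : Dcal = Finset.univ.filter (fun i : Fin (2 * n + 1) => n ≤ (i : ℕ) ∧ (i : ℕ) < 2 * n))
    (Iy : 𝒴 → Ω → Finset (Fin (2 * n + 1)))
    (hIy : ∀ y ω, Iy y ω = Dcal.filter (fun i => (Z i ω).2 = y))
    (p : 𝒴 → Ω → ℝ)
    (hp : ∀ y ω, p y ω =
      ((((Iy y ω).filter
          (fun i => s ((Z i ω).1, y) ≤ s ((Z (Fin.last (2 * n)) ω).1, y))).card : ℝ) + 1)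
        / (((Iy y ω).card : ℝ) + 1))
    (y : 𝒴) (I : Finset (Fin (2 * n + 1))) (hI : I ⊆ Dcal)
    (t : ℝ) (ht : t ∈ Set.Icc (0 : ℝ) 1) :
    P[|{ω | Iy y ω = I ∧ (Z (Fin.last (2 * n)) ω).2 = y}] {ω | p y ω ≤ t}
      ≤ ENNReal.ofReal t := by
  set L := Fin.last (2 * n)
  have hLD : L ∉ Dcal := by
    subst hDcal
    simp [L]
  have hLI : L ∉ I := fun h => hLD (hI h)
  set K := insert L I
  set E := coordPattern (insert L Dcal) K {q : 𝒳 × 𝒴 | q.2 = y}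
  have hB : MeasurableSet {q : 𝒳 × 𝒴 | q.2 = y} := measurable_snd (measurableSet_singleton y)
  set X : Ω → Fin (2 * n + 1) → 𝒳 × 𝒴 := fun ω i => Z i ω
  have hX : Measurable X := measurable_pi_lambda _ hmeas
  have hE : MeasurableSet (X ⁻¹' E) := hX (measurableSet_coordPattern hB _ _)
  have hevent : {ω | Iy y ω = I ∧ (Z L ω).2 = y} = X ⁻¹' E := by
    ext ω
    simp only [hIy]
    exact filter_eq_and_iff_forall_mem_insert hI hLD _
  have hpE : ∀ ω ∈ X ⁻¹' E, p y ω = (scoreRank K (fun i => s ((X ω i).1, y)) L : ℝ) / #K := by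
    intro ω hω
    rw [← hevent] at hω
    rw [hp, hω.1, scoreRank_insert_self hLI, card_insert_of_notMem hLI]
    push_cast
    rfl
  have hlaw : ∀ σ : Equiv.Perm _, (P.map X).map (· ∘ σ) = P.map X := fun σ => by
    rw [Measure.map_map (by fun_prop) hX]
    exact hexch σ
  have hg : Measurable fun q : 𝒳 × 𝒴 => s (q.1, y) := by fun_prop
  calc P[|{ω | Iy y ω = I ∧ (Z L ω).2 = y}] {ω | p y ω ≤ t}
      = P[|X ⁻¹' E] (X ⁻¹' {z | (scoreRank K (fun i => s ((z i).1, y)) L : ℝ) / #K ≤ t}) := by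
        rw [hevent, ← cond_inter_self hE, ← cond_inter_self hE (X ⁻¹' _)]
        congr 1
        ext ω
        simp +contextual [hpE]
    _ ≤ (P.map X)[|E] {z | (scoreRank K (fun i => s ((z i).1, y)) L : ℝ) / #K ≤ t} := by
        rw [cond_map hX (measurableSet_coordPattern hB _ _)]
        exact Measure.le_map_apply hX.aemeasurable _
    _ ≤ ENNReal.ofReal t := cond_coordPattern_scoreRank_div_card_le hlaw hB
        (insert_subset_insert L hI) (mem_insert_self L I) hg ht.1

/-- Proposition 2: validity of the class-specific conditional conformal
p-value. For exchangeable pairs `(X_i, Y_i)`, `i = 1, ..., 2n+1` (indexed by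
`Fin (2n+1)`, the last index being the test point), calibration indices `{n+1,...,2n}`
(here `{i : n ≤ i < 2n}`), and any label `y`, subset `I` of the calibration indices and
`t ∈ [0,1]`: conditionally on `{I_y = I, Y_{2n+1} = y}` (assumed of positive probability),
`P(p(X_{2n+1}|y) ≤ t) ≤ t`. -/
theorem conditional_conformal_pvalue_valid
    {Ω : Type*} [MeasurableSpace Ω] (P : Measure Ω) [IsProbabilityMeasure P]
    {𝒳 : Type*} [MeasurableSpace 𝒳]
    {𝒴 : Type*} [Fintype 𝒴] [Nonempty 𝒴] [DecidableEq 𝒴]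
    [MeasurableSpace 𝒴] [MeasurableSingletonClass 𝒴]
    (n : ℕ) (hn : 1 ≤ n)
    (Z : Fin (2 * n + 1) → Ω → 𝒳 × 𝒴)
    (hmeas : ∀ i, Measurable (Z i))
    (hexch : ∀ σ : Equiv.Perm (Fin (2 * n + 1)),
      Measure.map (fun ω i => Z (σ i) ω) P = Measure.map (fun ω i => Z i ω) P)
    (s : 𝒳 × 𝒴 → ℝ) (hs : Measurable s)
    (Dcal : Finset (Fin (2 * n + 1)))
    (hDcal : Dcal = Finset.univ.filter (fun i : Fin (2 * n + 1) => n ≤ (i : ℕ) ∧ (i : ℕ) < 2 * n))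
    (Iy : 𝒴 → Ω → Finset (Fin (2 * n + 1)))
    (hIy : ∀ y ω, Iy y ω = Dcal.filter (fun i => (Z i ω).2 = y))
    (p : 𝒴 → Ω → ℝ)
    (hp : ∀ y ω, p y ω =
      ((((Iy y ω).filter
          (fun i => s ((Z i ω).1, y) ≤ s ((Z (Fin.last (2 * n)) ω).1, y))).card : ℝ) + 1)
        / (((Iy y ω).card : ℝ) + 1))
    (y : 𝒴) (I : Finset (Fin (2 * n + 1))) (hI : I ⊆ Dcal)
    (t : ℝ) (ht : t ∈ Set.Icc (0 : ℝ) 1)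
    (hpos : 0 < P {ω | Iy y ω = I ∧ (Z (Fin.last (2 * n)) ω).2 = y}) :
    P[|{ω | Iy y ω = I ∧ (Z (Fin.last (2 * n)) ω).2 = y}] {ω | p y ω ≤ t}
      ≤ ENNReal.ofReal t :=
  conditional_conformal_pvalue_valid_general P n Z hmeas hexch s hs Dcal hDcal Iy hIy p hp y I hI t
    ht
end

section
/- Let n ≥ 1, let 𝒴 be a finite nonempty set of labels, and let (X_i, Y_i), i = 1, ..., 2n+1, be random variables with values in 𝒳 × 𝒴 whose joint distribution is exchangeable. Fix a measurable score function s : 𝒳 × 𝒴 → ℝ. For y ∈ 𝒴 and I_y = {i ∈ {n+1,...,2n} : Y_i = y} with n_y = |I_y|, define p(X_{2n+1}|y) = (Σ_{i ∈ I_y} 1{s(X_i, y) ≤ s(X_{2n+1}, y)} + 1)/(n_y + 1). Fix y ∈ 𝒴 and a subset I ⊆ {n+1,...,2n} with |I| = m such that the event {I_y = I, Y_{2n+1} = y} has positive probability, and suppose that on this event the scores {s(X_i, y) : i ∈ I} ∪ {s(X_{2n+1}, y)} are almost surely pairwise distinct. Then conditionally on {I_y = I, Y_{2n+1} = y}, p(X_{2n+1}|y)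 is uniformly distributed on {1/(m+1), 2/(m+1), ..., 1}. -/
open MeasureTheory ProbabilityTheory
open scoped ENNReal

lemma rank_injOn {α : Type*} [DecidableEq α] (J : Finset α) (f : α → ℝ)
    (hf : Set.InjOn f J) :
    Set.InjOn (fun j => (J.filter (fun i => f i ≤ f j)).card) ↑J := by
  intro j hj j' hj' h
  by_contra hne
  have hfne : f j ≠ f j' := fun hfe => hne (hf hj hj' hfe)
  have key : ∀ a b : α, a ∈ J → b ∈ J → f a < f b →
      (J.filter (fun i => f i ≤ f a)).card < (J.filter (fun i => f i ≤ f b)).card := by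
    intro a b ha hb hab
    apply Finset.card_lt_card
    constructor
    · intro i hi
      simp only [Finset.mem_filter] at hi ⊢
      exact ⟨hi.1, hi.2.trans hab.le⟩
    · intro hsub
      have := hsub (Finset.mem_filter.2 ⟨hb, le_refl _⟩)
      simp only [Finset.mem_filter] at this
      exact absurd this.2 (not_le.2 hab)
  rcases lt_or_gt_of_ne hfne with hlt | hgt
  · exact absurd h (Nat.ne_of_lt (key _ _ hj hj' hlt))
  · exact absurd h.symm (Nat.ne_of_lt (key _ _ hj' hj hgt))

lemma exists_unique_rank {α : Type*} [DecidableEq α] (J : Finset α) (f : α → ℝ)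
    (hf : Set.InjOn f J) (k : ℕ) (hk1 : 1 ≤ k) (hk2 : k ≤ J.card) :
    ∃! j, j ∈ J ∧ (J.filter (fun i => f i ≤ f j)).card = k := by
  have hinj := rank_injOn J f hf
  set r : α → ℕ := fun j => (J.filter (fun i => f i ≤ f j)).card with hr
  have himg : J.image r = Finset.Icc 1 J.card := by
    apply Finset.eq_of_subset_of_card_le
    · intro x hx
      rcases Finset.mem_image.1 hx with ⟨j, hj, rfl⟩
      refine Finset.mem_Icc.2 ⟨?_, ?_⟩
      · exact Finset.card_pos.2 ⟨j, Finset.mem_filter.2 ⟨hj, le_refl _⟩⟩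
      · exact Finset.card_le_card (Finset.filter_subset _ _)
    · rw [Nat.card_Icc]
      simp [Finset.card_image_of_injOn hinj]
  have hk : k ∈ J.image r := by
    rw [himg]; exact Finset.mem_Icc.2 ⟨hk1, hk2⟩
  rcases Finset.mem_image.1 hk with ⟨j, hj, hjk⟩
  refine ⟨j, ⟨hj, hjk⟩, ?_⟩
  intro j' ⟨hj', hjk'⟩
  exact hinj hj' hj (hjk'.trans hjk.symm)

lemma measurableSet_of_finite_pi {ι β : Type*} [Fintype ι] [Fintype β]
    [MeasurableSpace β] [MeasurableSingletonClass β] (t : Set (ι → β)) :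
    MeasurableSet t := by
  have hsing : ∀ g : ι → β, MeasurableSet {g} := by
    intro g
    have : {g} = ⋂ i, (fun v : ι → β => v i) ⁻¹' {g i} := by
      ext v; simp [funext_iff, Set.mem_iInter]
    rw [this]
    exact MeasurableSet.iInter fun i => measurable_pi_apply i (measurableSet_singleton _)
  have : t = ⋃ g ∈ t, {g} := by simp
  rw [this]
  exact MeasurableSet.biUnion (Set.to_countable t) fun g _ => hsing g

/-- Proposition 2, second part: conditionally on `{I_y = I, Y_{2n+1} = y}`
(with `|I| = m`), if the scores `{s(X_i, y) : i ∈ I} ∪ {s(X_{2n+1}, y)}` are a.s. pairwise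
distinct on this event, the conditional conformal p-value is uniformly distributed on
`{1/(m+1), ..., 1}`. -/
theorem conditional_conformal_pvalue_uniform
    {Ω : Type*} [MeasurableSpace Ω] (P : Measure Ω) [IsProbabilityMeasure P]
    {𝒳 : Type*} [MeasurableSpace 𝒳]
    {𝒴 : Type*} [Fintype 𝒴] [Nonempty 𝒴] [DecidableEq 𝒴]
    [MeasurableSpace 𝒴] [MeasurableSingletonClass 𝒴]
    (n : ℕ) (hn : 1 ≤ n)
    (Z : Fin (2 * n + 1) → Ω → 𝒳 × 𝒴)
    (hmeas : ∀ i, Measurable (Z i))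
    (hexch : ∀ σ : Equiv.Perm (Fin (2 * n + 1)),
      Measure.map (fun ω i => Z (σ i) ω) P = Measure.map (fun ω i => Z i ω) P)
    (s : 𝒳 × 𝒴 → ℝ) (hs : Measurable s)
    (Dcal : Finset (Fin (2 * n + 1)))
    (hDcal : Dcal = Finset.univ.filter
      (fun i : Fin (2 * n + 1) => n ≤ (i : ℕ) ∧ (i : ℕ) < 2 * n))
    (Iy : 𝒴 → Ω → Finset (Fin (2 * n + 1)))
    (hIy : ∀ y ω, Iy y ω = Dcal.filter (fun i => (Z i ω).2 = y))
    (p : 𝒴 → Ω → ℝ)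
    (hp : ∀ y ω, p y ω =
      ((((Iy y ω).filter
          (fun i => s ((Z i ω).1, y) ≤ s ((Z (Fin.last (2 * n)) ω).1, y))).card : ℝ) + 1)
        / (((Iy y ω).card : ℝ) + 1))
    (y : 𝒴) (I : Finset (Fin (2 * n + 1))) (hI : I ⊆ Dcal)
    (m : ℕ) (hm : I.card = m)
    (hpos : 0 < P {ω | Iy y ω = I ∧ (Z (Fin.last (2 * n)) ω).2 = y})
    (hdist : ∀ᵐ ω ∂P, (Iy y ω = I ∧ (Z (Fin.last (2 * n)) ω).2 = y) →
      Set.InjOn (fun i => s ((Z i ω).1, y)) ↑(insert (Fin.last (2 * n)) I))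
    (k : ℕ) (hk1 : 1 ≤ k) (hk2 : k ≤ m + 1) :
    P[|{ω | Iy y ω = I ∧ (Z (Fin.last (2 * n)) ω).2 = y}]
        {ω | p y ω = (k : ℝ) / (m + 1)} = 1 / ((m : ℝ≥0∞) + 1) := by
  classical
  set L : Fin (2 * n + 1) := Fin.last (2 * n) with hL
  -- basic facts about L, Dcal, I
  have hLD : L ∉ Dcal := by
    rw [hDcal]
    simp [hL, Fin.val_last]
  have hLI : L ∉ I := fun h => hLD (hI h)
  set J : Finset (Fin (2 * n + 1)) := insert L I with hJ
  have hJcard : J.card = m + 1 := by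
    rw [hJ, Finset.card_insert_of_notMem hLI, hm]
  -- vector-space reformulation
  set W : Ω → (Fin (2 * n + 1) → 𝒳 × 𝒴) := fun ω i => Z i ω with hW
  have hWm : Measurable W := measurable_pi_lambda _ fun i => hmeas i
  set Ev : Set (Fin (2 * n + 1) → 𝒳 × 𝒴) :=
    {v | Dcal.filter (fun i => (v i).2 = y) = I ∧ (v L).2 = y} with hEv
  set Rk : Fin (2 * n + 1) → (Fin (2 * n + 1) → 𝒳 × 𝒴) → ℕ :=
    fun j v => (J.filter (fun i => s ((v i).1, y) ≤ s ((v j).1, y))).card with hRk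
  set S : Fin (2 * n + 1) → Set (Fin (2 * n + 1) → 𝒳 × 𝒴) :=
    fun j => Ev ∩ {v | Rk j v = k} with hS
  have hEeq : {ω | Iy y ω = I ∧ (Z L ω).2 = y} = W ⁻¹' Ev := by
    ext ω
    rw [Set.mem_setOf_eq, Set.mem_preimage, hIy]
    exact Iff.rfl
  have hEofEv : ∀ ω, W ω ∈ Ev → (Iy y ω = I ∧ (Z L ω).2 = y) := by
    intro ω h; rw [hIy]; exact h
  have hEvofE : ∀ ω, (Iy y ω = I ∧ (Z L ω).2 = y) → W ω ∈ Ev := by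
    intro ω h; rw [hIy] at h; exact h
  -- measurability
  have hEvm : MeasurableSet Ev := by
    have : Ev = (fun v (i : Fin (2 * n + 1)) => (v i).2) ⁻¹'
        {g : Fin (2 * n + 1) → 𝒴 | Dcal.filter (fun i => g i = y) = I ∧ g L = y} := rfl
    rw [this]
    exact (measurable_pi_lambda _ fun i => (measurable_pi_apply i).snd)
      (measurableSet_of_finite_pi _)
  have hRkm : ∀ j, Measurable (Rk j) := by
    intro j
    have : Rk j = fun v => ∑ i ∈ J,
        if s ((v i).1, y) ≤ s ((v j).1, y) then 1 else 0 := by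
      funext v; simp only [hRk]; rw [Finset.card_filter]
    rw [this]
    apply Finset.measurable_sum
    intro i _
    apply Measurable.ite _ measurable_const measurable_const
    apply measurableSet_le
    · exact hs.comp (((measurable_pi_apply i).fst).prodMk measurable_const)
    · exact hs.comp (((measurable_pi_apply j).fst).prodMk measurable_const)
  have hSm : ∀ j, MeasurableSet (S j) := fun j =>
    hEvm.inter ((hRkm j) (measurableSet_singleton k))
  -- swap invariance
  have hswap : ∀ j ∈ J, P (W ⁻¹' S j) = P (W ⁻¹' S L) := by
    intro j hj
    by_cases hjL : j = L
    · rw [hjL]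
    have hjI : j ∈ I := by
      rcases Finset.mem_insert.1 hj with h | h
      · exact absurd h hjL
      · exact h
    set σ : Equiv.Perm (Fin (2 * n + 1)) := Equiv.swap L j with hσ
    have hσL : σ L = j := Equiv.swap_apply_left L j
    have hσj : σ j = L := Equiv.swap_apply_right L j
    have hσother : ∀ i, i ≠ L → i ≠ j → σ i = i := fun i h1 h2 =>
      Equiv.swap_apply_of_ne_of_ne h1 h2
    have hσJ : ∀ i ∈ J, σ i ∈ J := by
      intro i hi
      by_cases h1 : i = L
      · rw [h1, hσL]; exact Finset.mem_insert_of_mem hjI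
      by_cases h2 : i = j
      · rw [h2, hσj]; exact Finset.mem_insert_self _ _
      · rw [hσother i h1 h2]; exact hi
    have hσσ : ∀ i, σ (σ i) = i := fun i => Equiv.swap_apply_self L j i
    set T : (Fin (2 * n + 1) → 𝒳 × 𝒴) → (Fin (2 * n + 1) → 𝒳 × 𝒴) :=
      fun v i => v (σ i) with hT
    -- Ev is stable under precomposition by σ
    have hTT : ∀ v, T (T v) = v := by
      intro v; funext i
      show v (σ (σ i)) = v i
      rw [hσσ]
    have hEvσ : ∀ v, v ∈ Ev → T v ∈ Ev := by
      intro v hv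
      obtain ⟨hv1, hv2⟩ := hv
      have hvj : (v j).2 = y := by
        have : j ∈ Dcal.filter (fun i => (v i).2 = y) := hv1 ▸ hjI
        exact (Finset.mem_filter.1 this).2
      refine ⟨?_, ?_⟩
      · ext i
        simp only [Finset.mem_filter]
        show (i ∈ Dcal ∧ (v (σ i)).2 = y) ↔ i ∈ I
        by_cases h1 : i = L
        · subst h1
          rw [hσL]
          constructor
          · rintro ⟨h, -⟩; exact absurd h hLD
          · intro h; exact absurd h hLI
        by_cases h2 : i = j
        · subst h2
          rw [hσj]
          constructor
          · intro _; exact hjI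
          · intro _; exact ⟨hI hjI, hv2⟩
        · rw [hσother i h1 h2]
          rw [← hv1]
          simp [Finset.mem_filter]
      · show (v (σ L)).2 = y
        rw [hσL]; exact hvj
    have hEvIff : ∀ v, T v ∈ Ev ↔ v ∈ Ev := by
      intro v
      constructor
      · intro h
        have h2 := hEvσ _ h
        rw [hTT v] at h2
        exact h2
      · exact hEvσ v
    -- rank transformation
    have hRkσ : ∀ v, Rk j (T v) = Rk L v := by
      intro v
      show (J.filter (fun i => s ((v (σ i)).1, y) ≤ s ((v (σ j)).1, y))).card
        = (J.filter (fun i => s ((v i).1, y) ≤ s ((v L).1, y))).card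
      rw [hσj]
      apply Finset.card_bij' (fun a _ => σ a) (fun a _ => σ a)
      · intro a ha
        simp only [Finset.mem_filter] at ha ⊢
        exact ⟨hσJ a ha.1, ha.2⟩
      · intro a ha
        simp only [Finset.mem_filter] at ha ⊢
        refine ⟨hσJ a ha.1, ?_⟩
        simpa [hσσ] using ha.2
      · intro a _; exact hσσ a
      · intro a _; exact hσσ a
    have hpre : T ⁻¹' S j = S L := by
      ext v
      simp only [hS, Set.mem_preimage, Set.mem_inter_iff, Set.mem_setOf_eq]
      rw [show (T v ∈ Ev ↔ v ∈ Ev) from hEvIff v, hRkσ v]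
    have hcomp : (fun ω i => Z (σ i) ω) = T ∘ W := rfl
    have hσmeas : Measurable T :=
      measurable_pi_lambda _ fun i => measurable_pi_apply (σ i)
    calc P (W ⁻¹' S j) = (Measure.map W P) (S j) := (Measure.map_apply hWm (hSm j)).symm
      _ = (Measure.map (fun ω i => Z (σ i) ω) P) (S j) := by rw [hexch σ]
      _ = P ((fun ω i => Z (σ i) ω) ⁻¹' S j) := by
          rw [Measure.map_apply (by rw [hcomp]; exact hσmeas.comp hWm) (hSm j)]
      _ = P (W ⁻¹' (T ⁻¹' S j)) := by
          rw [hcomp, Set.preimage_comp]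
      _ = P (W ⁻¹' S L) := by rw [hpre]
  -- the null set where distinctness fails
  set NN : Set Ω := MeasureTheory.toMeasurable P
    {ω | ¬ ((Iy y ω = I ∧ (Z L ω).2 = y) →
      Set.InjOn (fun i => s ((Z i ω).1, y)) ↑(insert L I))} with hNN
  have hNNm : MeasurableSet NN := measurableSet_toMeasurable _ _
  have hNNnull : P NN = 0 := by
    rw [hNN, measure_toMeasurable]
    exact MeasureTheory.ae_iff.1 hdist
  have hNNdist : ∀ ω, ω ∉ NN → (Iy y ω = I ∧ (Z L ω).2 = y) →
      Set.InjOn (fun i => s ((Z i ω).1, y)) ↑J := by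
    intro ω hω hE
    by_contra hcon
    refine hω (MeasureTheory.subset_toMeasurable _ _ ?_)
    simp only [Set.mem_setOf_eq]
    intro h
    exact hcon (h hE)
  -- covering and disjointness
  have hsubE : ∀ j, W ⁻¹' S j ⊆ W ⁻¹' Ev := fun j ω hω => hω.1
  have hrkW : ∀ ω j, Rk j (W ω) = (J.filter (fun i => s ((Z i ω).1, y) ≤ s ((Z j ω).1, y))).card := by
    intro ω j; rfl
  have hcover : (W ⁻¹' Ev) \ NN = ⋃ j ∈ J, ((W ⁻¹' S j) \ NN) := by
    ext ω
    simp only [Set.mem_diff, Set.mem_iUnion, exists_prop]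
    constructor
    · rintro ⟨hωE, hωN⟩
      have hEω : Iy y ω = I ∧ (Z L ω).2 = y := hEofEv ω hωE
      have hinj := hNNdist ω hωN hEω
      obtain ⟨j, ⟨hjJ, hjrk⟩, -⟩ := exists_unique_rank J (fun i => s ((Z i ω).1, y))
        hinj k hk1 (by rw [hJcard]; exact hk2)
      exact ⟨j, hjJ, ⟨⟨hωE, by rw [Set.mem_setOf_eq, hrkW ω j]; exact hjrk⟩, hωN⟩⟩
    · rintro ⟨j, hjJ, ⟨hωS, hωN⟩⟩
      exact ⟨hsubE j hωS, hωN⟩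
  have hdisj : (↑J : Set (Fin (2 * n + 1))).PairwiseDisjoint
      (fun j => (W ⁻¹' S j) \ NN) := by
    intro j hj j' hj' hne
    rw [Function.onFun, Set.disjoint_left]
    rintro ω ⟨hωS, hωN⟩ ⟨hωS', -⟩
    have hωE : W ω ∈ Ev := hωS.1
    have hEω : Iy y ω = I ∧ (Z L ω).2 = y := hEofEv ω hωE
    have hinj := hNNdist ω hωN hEω
    obtain ⟨j₀, -, huniq⟩ := exists_unique_rank J (fun i => s ((Z i ω).1, y))
      hinj k hk1 (by rw [hJcard]; exact hk2)
    have h1 : j = j₀ := huniq j ⟨hj, by rw [← hrkW ω j]; exact hωS.2⟩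
    have h2 : j' = j₀ := huniq j' ⟨hj', by rw [← hrkW ω j']; exact hωS'.2⟩
    exact hne (h1.trans h2.symm)
  -- sum identity
  have hBm : ∀ j, MeasurableSet ((W ⁻¹' S j) \ NN) := fun j => (hWm (hSm j)).diff hNNm
  have hsum : P (W ⁻¹' Ev) = (m + 1 : ℝ≥0∞) * P (W ⁻¹' S L) := by
    have h1 : P (W ⁻¹' Ev) = P ((W ⁻¹' Ev) \ NN) := (measure_diff_null hNNnull).symm
    have h2 : ∀ j, P ((W ⁻¹' S j) \ NN) = P (W ⁻¹' S j) := fun j => measure_diff_null hNNnull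
    rw [h1, hcover, measure_biUnion_finset hdisj (fun j _ => hBm j)]
    calc ∑ j ∈ J, P ((W ⁻¹' S j) \ NN) = ∑ j ∈ J, P (W ⁻¹' S L) := by
          apply Finset.sum_congr rfl
          intro j hj
          rw [h2 j, hswap j hj]
      _ = (J.card : ℝ≥0∞) * P (W ⁻¹' S L) := by
          rw [Finset.sum_const, nsmul_eq_mul]
      _ = (m + 1 : ℝ≥0∞) * P (W ⁻¹' S L) := by rw [hJcard]; push_cast; ring_nf
  -- the event {p = k/(m+1)} intersected with E equals W⁻¹' S L
  have hinter : {ω | Iy y ω = I ∧ (Z L ω).2 = y} ∩ {ω | p y ω = (k : ℝ) / (m + 1)}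
      = W ⁻¹' S L := by
    ext ω
    simp only [Set.mem_inter_iff, Set.mem_setOf_eq, Set.mem_preimage, hS,
      Set.mem_inter_iff, Set.mem_setOf_eq]
    constructor
    · rintro ⟨hEω, hpω⟩
      have hωE : W ω ∈ Ev := hEvofE ω hEω
      refine ⟨hωE, ?_⟩
      have hfl : J.filter (fun i => s ((Z i ω).1, y) ≤ s ((Z L ω).1, y))
          = insert L (I.filter (fun i => s ((Z i ω).1, y) ≤ s ((Z L ω).1, y))) := by
        rw [hJ, Finset.filter_insert, if_pos (le_refl _)]
      have hcard : Rk L (W ω) = (I.filter (fun i => s ((Z i ω).1, y) ≤ s ((Z L ω).1, y))).card + 1 := by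
        rw [hrkW, hfl, Finset.card_insert_of_notMem (fun h => hLI (Finset.filter_subset _ _ h))]
      rw [hp] at hpω
      rw [hEω.1, hm] at hpω
      have hm1 : ((m : ℝ) + 1) ≠ 0 := by positivity
      rw [div_eq_div_iff hm1 hm1] at hpω
      have : ((I.filter (fun i => s ((Z i ω).1, y) ≤ s ((Z L ω).1, y))).card : ℝ) + 1 = k :=
        mul_right_cancel₀ hm1 hpω
      rw [hcard]
      exact_mod_cast this
    · rintro ⟨hωE, hrk⟩
      have hEω : Iy y ω = I ∧ (Z L ω).2 = y := hEofEv ω hωE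
      refine ⟨hEω, ?_⟩
      have hfl : J.filter (fun i => s ((Z i ω).1, y) ≤ s ((Z L ω).1, y))
          = insert L (I.filter (fun i => s ((Z i ω).1, y) ≤ s ((Z L ω).1, y))) := by
        rw [hJ, Finset.filter_insert, if_pos (le_refl _)]
      have hcard : Rk L (W ω) = (I.filter (fun i => s ((Z i ω).1, y) ≤ s ((Z L ω).1, y))).card + 1 := by
        rw [hrkW, hfl, Finset.card_insert_of_notMem (fun h => hLI (Finset.filter_subset _ _ h))]
      rw [hp, hEω.1, hm]
      rw [hcard] at hrk
      congr 1
      exact_mod_cast hrk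
  -- finish
  have hEm : MeasurableSet {ω | Iy y ω = I ∧ (Z L ω).2 = y} := by
    rw [hEeq]; exact hWm hEvm
  have hPE : P {ω | Iy y ω = I ∧ (Z L ω).2 = y} = (m + 1 : ℝ≥0∞) * P (W ⁻¹' S L) := by
    rw [hEeq]; exact hsum
  have hc0 : P (W ⁻¹' S L) ≠ 0 := by
    intro h
    rw [hPE, h, mul_zero] at hpos
    exact lt_irrefl _ hpos
  have hcT : P (W ⁻¹' S L) ≠ ⊤ := measure_ne_top P _
  rw [ProbabilityTheory.cond_apply hEm, hinter, hPE]
  rw [ENNReal.mul_inv (Or.inr hcT) (Or.inr hc0)]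
  rw [mul_assoc, ENNReal.inv_mul_cancel hc0 hcT, mul_one, one_div]
end

section
/- Let n ≥ 1, let 𝒴 = {1, ..., K} with K ≥ 1, and let (X_i, Y_i), i = n+1, ..., 2n+1, be random variables with values in 𝒳 × 𝒴 whose joint distribution is exchangeable. Fix a measurable score function s : 𝒳 × 𝒴 → ℝ and, for each y ∈ 𝒴, define the marginal conformal p-value p(X_{2n+1}, y) = (Σ_{i=n+1}^{2n} 1{s(X_i, Y_i) ≤ s(X_{2n+1}, y)} + 1)/(n+1). Consider the multiple testing problem with hypotheses H_y : Y_{2n+1} = y for y = 1, ..., K. Then the step-down procedure that tests H_1, H_2, ..., H_K sequentially, rejecting H_i if p(X_{2n+1}, i) ≤ α and stopping at the first non-rejection (Procedure 1), satisfies FWER = P(reject H_{Y_{2n+1}}) ≤ α for every α ∈ (0,1). -/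
open MeasureTheory ProbabilityTheory
open scoped ENNReal

lemma rank_count_le {N : ℕ} (f : Fin N → ℝ) (m : ℕ) :
    (Finset.univ.filter (fun j : Fin N =>
      (Finset.univ.filter (fun i : Fin N => f i ≤ f j)).card ≤ m)).card ≤ m := by
  set S := Finset.univ.filter (fun j : Fin N =>
      (Finset.univ.filter (fun i : Fin N => f i ≤ f j)).card ≤ m) with hS
  rcases S.eq_empty_or_nonempty with h | h
  · simp [h]
  · obtain ⟨j, hjS, hj⟩ := S.exists_max_image f h
    have hsub : S ⊆ Finset.univ.filter (fun i => f i ≤ f j) := by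
      intro x hx
      simp only [Finset.mem_filter, Finset.mem_univ, true_and]
      exact hj x hx
    have h1 := Finset.card_le_card hsub
    have hjm : (Finset.univ.filter (fun i : Fin N => f i ≤ f j)).card ≤ m := by
      have := hjS; rw [hS] at this
      simpa using this
    omega

/-- Proposition 3, Procedure 1: for exchangeable pairs
`(X_i, Y_i)`, `i = n+1, ..., 2n+1` (indexed by `Fin (n+1)`, the last index being the test
point) with labels in `𝒴 = Fin K`, the sequential procedure testing `H_1, ..., H_K` in
increasing order (rejecting `H_i` iff `p(X_{2n+1}, i) ≤ α`, stopping at the first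
non-rejection) controls the FWER: the true hypothesis `H_{Y_{2n+1}}` is rejected (i.e.
`p(X_{2n+1}, i) ≤ α` for all `i ≤ Y_{2n+1}`) with probability at most `α`. -/
theorem procedure1_fwer_control
    {Ω : Type*} [MeasurableSpace Ω] (P : Measure Ω) [IsProbabilityMeasure P]
    {𝒳 : Type*} [MeasurableSpace 𝒳]
    (n K : ℕ) (hn : 1 ≤ n) (hK : 1 ≤ K)
    (Z : Fin (n + 1) → Ω → 𝒳 × Fin K)
    (hmeas : ∀ i, Measurable (Z i))
    (hexch : ∀ σ : Equiv.Perm (Fin (n + 1)),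
      Measure.map (fun ω i => Z (σ i) ω) P = Measure.map (fun ω i => Z i ω) P)
    (s : 𝒳 × Fin K → ℝ) (hs : Measurable s)
    (p : Ω → Fin K → ℝ)
    (hp : ∀ ω y, p ω y =
      (((Finset.univ.filter
          (fun i : Fin n => s (Z i.castSucc ω) ≤ s ((Z (Fin.last n) ω).1, y))).card : ℝ) + 1)
        / (n + 1))
    (α : ℝ) (hα : α ∈ Set.Ioo (0 : ℝ) 1) :
    P {ω | ∀ i : Fin K, i ≤ (Z (Fin.last n) ω).2 → p ω i ≤ α} ≤ ENNReal.ofReal α := by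
  obtain ⟨hα0, hα1⟩ := hα
  have hn1 : (0:ℝ) < (n:ℝ) + 1 := by positivity
  set m : ℕ := ⌊α * ((n:ℝ) + 1)⌋₊ with hm
  set W : Ω → (Fin (n+1) → 𝒳 × Fin K) := fun ω i => Z i ω with hW
  have hWmeas : Measurable W := measurable_pi_lambda _ hmeas
  set g : Fin (n+1) → (Fin (n+1) → 𝒳 × Fin K) → ℕ :=
    fun j z => (Finset.univ.filter (fun i => s (z i) ≤ s (z j))).card with hg
  have hgsum : ∀ j z, g j z = ∑ i : Fin (n+1), if s (z i) ≤ s (z j) then 1 else 0 := by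
    intro j z; exact Finset.card_filter _ _
  have hgmeas : ∀ j, Measurable (g j) := by
    intro j
    have : g j = fun z => ∑ i : Fin (n+1), if s (z i) ≤ s (z j) then 1 else 0 := by
      funext z; exact hgsum j z
    rw [this]
    apply Finset.measurable_sum
    intro i _
    exact Measurable.ite
      (measurableSet_le (hs.comp (measurable_pi_apply i)) (hs.comp (measurable_pi_apply j)))
      measurable_const measurable_const
  set A : Fin (n+1) → Set (Fin (n+1) → 𝒳 × Fin K) := fun j => {z | g j z ≤ m} with hA
  have hAmeas : ∀ j, MeasurableSet (A j) := fun j => hgmeas j (MeasurableSet.of_discrete (s := Set.Iic m))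
  -- g at the last index equals R + 1
  have hglast : ∀ ω, g (Fin.last n) (W ω) =
      (Finset.univ.filter
        (fun i : Fin n => s (Z i.castSucc ω) ≤ s (Z (Fin.last n) ω))).card + 1 := by
    intro ω
    rw [hgsum, Fin.sum_univ_castSucc, if_pos le_rfl, Finset.card_filter]
  -- Step 1: inclusion
  have hincl : {ω | ∀ i : Fin K, i ≤ (Z (Fin.last n) ω).2 → p ω i ≤ α} ⊆
      W ⁻¹' (A (Fin.last n)) := by
    intro ω hω
    have hpY : p ω ((Z (Fin.last n) ω).2) ≤ α := hω _ le_rfl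
    rw [hp] at hpY
    have heta : ((Z (Fin.last n) ω).1, (Z (Fin.last n) ω).2) = Z (Fin.last n) ω := rfl
    rw [heta] at hpY
    have hle : ((Finset.univ.filter
        (fun i : Fin n => s (Z i.castSucc ω) ≤ s (Z (Fin.last n) ω))).card : ℝ) + 1
        ≤ α * ((n:ℝ) + 1) := by
      rw [div_le_iff₀ hn1] at hpY
      linarith
    have : g (Fin.last n) (W ω) ≤ m := by
      rw [hm]
      apply Nat.le_floor
      rw [hglast ω]
      push_cast
      exact hle
    exact this
  -- Step 2: all the A j events have the same probability
  have heq : ∀ j : Fin (n+1), P (W ⁻¹' A j) = P (W ⁻¹' A (Fin.last n)) := by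
    intro j
    set σ : Equiv.Perm (Fin (n+1)) := Equiv.swap j (Fin.last n) with hσ
    have hgswap : ∀ z : Fin (n+1) → 𝒳 × Fin K,
        g (Fin.last n) (fun i => z (σ i)) = g j z := by
      intro z
      rw [hgsum, hgsum]
      have hσl : σ (Fin.last n) = j := Equiv.swap_apply_right _ _
      rw [hσl]
      exact Fintype.sum_equiv σ _ _ (fun i => rfl)
    have hset : W ⁻¹' A j = (fun ω i => Z (σ i) ω) ⁻¹' A (Fin.last n) := by
      ext ω
      simp only [Set.mem_preimage, hA, Set.mem_setOf_eq]
      rw [show (fun i => Z (σ i) ω) = (fun i => W ω (σ i)) from rfl, hgswap (W ω)]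
    have hσmeas : Measurable (fun ω i => Z (σ i) ω) :=
      measurable_pi_lambda _ (fun i => hmeas (σ i))
    rw [hset, ← Measure.map_apply hσmeas (hAmeas _), hexch σ,
      Measure.map_apply hWmeas (hAmeas _)]
  -- Step 3: sum bound
  have hsum : (↑(n+1) : ℝ≥0∞) * P (W ⁻¹' A (Fin.last n)) ≤ (m : ℝ≥0∞) := by
    have h1 : ∑ j : Fin (n+1), P (W ⁻¹' A j)
        = (↑(n+1) : ℝ≥0∞) * P (W ⁻¹' A (Fin.last n)) := by
      rw [Finset.sum_congr rfl (fun j _ => heq j)]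
      simp [mul_comm]
    rw [← h1]
    have h2 : ∀ j : Fin (n+1), P (W ⁻¹' A j)
        = ∫⁻ ω, (W ⁻¹' A j).indicator (1 : Ω → ℝ≥0∞) ω ∂P := by
      intro j
      rw [lintegral_indicator_one (hWmeas (hAmeas j))]
    calc ∑ j : Fin (n+1), P (W ⁻¹' A j)
        = ∑ j : Fin (n+1), ∫⁻ ω, (W ⁻¹' A j).indicator (1 : Ω → ℝ≥0∞) ω ∂P :=
          Finset.sum_congr rfl (fun j _ => h2 j)
      _ = ∫⁻ ω, ∑ j : Fin (n+1), (W ⁻¹' A j).indicator (1 : Ω → ℝ≥0∞) ω ∂P :=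
          (lintegral_finset_sum _
            (fun j _ => measurable_one.indicator (hWmeas (hAmeas j)))).symm
      _ ≤ ∫⁻ _, (m : ℝ≥0∞) ∂P := by
          apply lintegral_mono
          intro ω
          have key := rank_count_le (fun i : Fin (n+1) => s (Z i ω)) m
          calc ∑ j : Fin (n+1), (W ⁻¹' A j).indicator (1 : Ω → ℝ≥0∞) ω
              = ∑ j : Fin (n+1), if g j (W ω) ≤ m then (1:ℝ≥0∞) else 0 := by
                refine Finset.sum_congr rfl (fun j _ => ?_)
                by_cases h : g j (W ω) ≤ m
                · have hmem : ω ∈ W ⁻¹' A j := h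
                  simp [Set.indicator_of_mem hmem, h]
                · have hmem : ω ∉ W ⁻¹' A j := h
                  simp [Set.indicator_of_notMem hmem, h]
            _ = ((Finset.univ.filter (fun j : Fin (n+1) => g j (W ω) ≤ m)).card : ℝ≥0∞) := by
                rw [Finset.sum_boole]
            _ ≤ (m : ℝ≥0∞) := by
                exact_mod_cast key
      _ = (m : ℝ≥0∞) := by simp
  -- Step 4: conclude
  have hmle : (m : ℝ≥0∞) ≤ ENNReal.ofReal α * (↑(n+1) : ℝ≥0∞) := by
    have h1 : (m:ℝ) ≤ α * ((n:ℝ)+1) := Nat.floor_le (by positivity)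
    calc (m : ℝ≥0∞) = ENNReal.ofReal (m : ℝ) := by simp
      _ ≤ ENNReal.ofReal (α * ((n:ℝ)+1)) := ENNReal.ofReal_le_ofReal h1
      _ = ENNReal.ofReal α * ENNReal.ofReal ((n:ℝ)+1) := ENNReal.ofReal_mul hα0.le
      _ = ENNReal.ofReal α * (↑(n+1) : ℝ≥0∞) := by
          congr 1
          rw [show ((n:ℝ)+1) = ((n+1 : ℕ) : ℝ) by push_cast; ring, ENNReal.ofReal_natCast]
  have hfinal : P (W ⁻¹' A (Fin.last n)) ≤ ENNReal.ofReal α := by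
    have hc0 : (↑(n+1) : ℝ≥0∞) ≠ 0 := by simp
    have hctop : (↑(n+1) : ℝ≥0∞) ≠ ⊤ := by simp
    have := hsum.trans hmle
    rw [mul_comm (ENNReal.ofReal α)] at this
    exact (ENNReal.mul_le_mul_iff_right hc0 hctop).mp this
  exact (measure_mono hincl).trans hfinal
end

section
/- Let n ≥ 1, let 𝒴 = {1, ..., K} with K ≥ 1, and let (X_i, Y_i), i = n+1, ..., 2n+1, be random variables with values in 𝒳 × 𝒴 whose joint distribution is exchangeable. Fix a measurable score function s : 𝒳 × 𝒴 → ℝ, define p(X_{2n+1}, y) = (Σ_{i=n+1}^{2n} 1{s(X_i, Y_i) ≤ s(X_{2n+1}, y)} + 1)/(n+1), and suppose the scores s(X_{n+1}, Y_{n+1}), ..., s(X_{2n}, Y_{2n}), s(X_{2n+1}, Y_{2n+1}) are almost surely pairwise distinct. Then the single-step procedure rejecting H_y : Y_{2n+1} = y iff p(X_{2n+1}, y) ≤ α (Procedure 3) satisfies FWER = P(p(X_{2n+1}, Y_{2n+1}) ≤ α) ≥ α − 1/(n+1) for every α ∈ (0,1). -/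
open MeasureTheory ProbabilityTheory
open scoped ENNReal

open Finset

/-! The p-value at the true label is `R / (n + 1)`, where `R` is the rank of the test score among
all `n + 1` scores. By exchangeability all `n + 1` ranks have the same law, and since the scores
are a.s. distinct, at least `m = ⌊α (n + 1)⌋` of them are `≤ m`. Taking expectations,
`(n + 1) P(R ≤ m) ≥ m`, and `m / (n + 1) ≥ α - 1 / (n + 1)`. -/

namespace Conformal

section Rank

variable {ι α : Type*} [Fintype ι] [LinearOrder α]

noncomputable def rank (w : ι → α) (k : ι) : ℕ :=
  #{i | w i ≤ w k}

theorem rank_lt_rank {w : ι → α} {j k : ι} (h : w j < w k) : rank w j < rank w k := by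
  classical
  refine card_lt_card ⟨fun i hi => ?_, fun hsub => ?_⟩
  · simp only [mem_filter, mem_univ, true_and] at hi ⊢
    exact hi.trans h.le
  · have := hsub (mem_filter.mpr ⟨mem_univ k, le_rfl⟩)
    simp only [mem_filter, mem_univ, true_and] at this
    exact this.not_gt h

theorem rank_injective {w : ι → α} (hw : Function.Injective w) : Function.Injective (rank w) := by
  intro j k h
  rcases lt_trichotomy (w j) (w k) with hlt | heq | hgt
  · exact absurd h (rank_lt_rank hlt).ne
  · exact hw heq
  · exact absurd h (rank_lt_rank hgt).ne'

theorem rank_le_card (w : ι → α) (k : ι) : rank w k ≤ Fintype.card ι :=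
  card_filter_le _ _

/-- Distinct values have the distinct ranks `1, …, card ι`. -/
theorem le_card_rank_le {w : ι → α} (hw : Function.Injective w) {m : ℕ}
    (hm : m ≤ Fintype.card ι) : m ≤ #{k | rank w k ≤ m} := by
  classical
  have hlarge : #{k | ¬rank w k ≤ m} ≤ Fintype.card ι - m := by
    calc #{k | ¬rank w k ≤ m} ≤ #(Ioc m (Fintype.card ι)) := by
          refine card_le_card_of_injOn (rank w) (fun k hk => ?_) (rank_injective hw).injOn
          simp only [coe_filter, mem_univ, true_and, Set.mem_ofPred_eq, not_le] at hk
          exact mem_Ioc.mpr ⟨hk, rank_le_card w k⟩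
      _ = Fintype.card ι - m := Nat.card_Ioc _ _
  have hsplit := card_filter_add_card_filter_not (s := univ) (fun k => rank w k ≤ m)
  rw [card_univ] at hsplit
  omega

theorem rank_comp_perm (w : ι → α) (σ : Equiv.Perm ι) (k : ι) :
    rank (w ∘ σ) k = rank w (σ k) :=
  card_equiv σ (by simp)

theorem rank_last {n : ℕ} (w : Fin (n + 1) → α) :
    rank w (Fin.last n) = #{i : Fin n | w i.castSucc ≤ w (Fin.last n)} + 1 := by
  rw [rank, card_filter, Fin.sum_univ_castSucc, card_filter]
  simp

end Rank

section Probability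

variable {Ω ι β : Type*} [MeasurableSpace Ω] [MeasurableSpace β]

theorem measure_comp_perm_eq {P : Measure Ω} {Z : ι → Ω → β} (hZ : ∀ i, Measurable (Z i))
    (hexch : ∀ σ : Equiv.Perm ι,
      Measure.map (fun ω i => Z (σ i) ω) P = Measure.map (fun ω i => Z i ω) P)
    (σ : Equiv.Perm ι) {S : Set (ι → β)} (hS : MeasurableSet S) :
    P ((fun ω i => Z (σ i) ω) ⁻¹' S) = P ((fun ω i => Z i ω) ⁻¹' S) := by
  rw [← Measure.map_apply (measurable_pi_lambda _ fun i => hZ (σ i)) hS, hexch,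
    Measure.map_apply (measurable_pi_lambda _ hZ) hS]

variable [Fintype ι] {α : Type*} [LinearOrder α] [TopologicalSpace α] [MeasurableSpace α]
  [OpensMeasurableSpace α] [OrderClosedTopology α] [SecondCountableTopology α]

theorem measurable_rank {s : β → α} (hs : Measurable s) (k : ι) :
    Measurable fun z : ι → β => rank (s ∘ z) k := by
  classical
  simp_rw [rank, card_filter]
  exact Finset.measurable_sum _ fun i _ => Measurable.ite
    (measurableSet_le (hs.comp (measurable_pi_apply i)) (hs.comp (measurable_pi_apply k)))
    measurable_const measurable_const

open Classical in
theorem le_sum_measure_of_ae_le_card {μ : Measure Ω} [IsProbabilityMeasure μ] {B : ι → Set Ω}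
    (hB : ∀ k, MeasurableSet (B k)) {m : ℕ} (h : ∀ᵐ ω ∂μ, m ≤ #{k | ω ∈ B k}) :
    (m : ℝ≥0∞) ≤ ∑ k, μ (B k) := by
  calc (m : ℝ≥0∞) = ∫⁻ _, (m : ℝ≥0∞) ∂μ := by simp
    _ ≤ ∫⁻ ω, ∑ k, (B k).indicator 1 ω ∂μ := by
        refine lintegral_mono_ae (h.mono fun ω hω => ?_)
        simp only [Set.indicator_apply, Pi.one_apply, sum_boole]
        exact_mod_cast hω
    _ = ∑ k, μ (B k) := by
        rw [lintegral_finsetSum _ fun k _ => measurable_one.indicator (hB k)]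
        exact sum_congr rfl fun k _ => lintegral_indicator_one (hB k)

theorem le_card_mul_measure_rank_le {P : Measure Ω} [IsProbabilityMeasure P]
    {Z : ι → Ω → β} (hZ : ∀ i, Measurable (Z i))
    (hexch : ∀ σ : Equiv.Perm ι,
      Measure.map (fun ω i => Z (σ i) ω) P = Measure.map (fun ω i => Z i ω) P)
    {s : β → α} (hs : Measurable s) (hdist : ∀ᵐ ω ∂P, Function.Injective fun i => s (Z i ω))
    {m : ℕ} (hm : m ≤ Fintype.card ι) (k : ι) :
    (m : ℝ≥0∞) ≤ Fintype.card ι * P {ω | rank (fun i => s (Z i ω)) k ≤ m} := by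
  classical
  set B : ι → Set Ω := fun j => {ω | rank (fun i => s (Z i ω)) j ≤ m}
  have hB : ∀ j, MeasurableSet (B j) := fun j =>
    measurable_rank hs j (measurableSet_Iic (a := m)) |>.preimage (measurable_pi_lambda _ hZ)
  have hconst : ∀ j, P (B j) = P (B k) := by
    intro j
    refine (measure_comp_perm_eq hZ hexch (Equiv.swap j k)
      (measurable_rank hs j (measurableSet_Iic (a := m)))).symm.trans (congrArg P ?_)
    ext ω
    change rank (s ∘ (fun i => Z i ω) ∘ Equiv.swap j k) j ≤ m ↔ _
    rw [← Function.comp_assoc, rank_comp_perm, Equiv.swap_apply_left]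
    rfl
  calc (m : ℝ≥0∞) ≤ ∑ j, P (B j) :=
        le_sum_measure_of_ae_le_card hB (hdist.mono fun ω hω => by convert le_card_rank_le hω hm; rfl)
    _ = Fintype.card ι * P (B k) := by simp [hconst, card_univ]

end Probability

end Conformal

theorem procedure3_fwer_lower_bound_general
    {Ω : Type*} [MeasurableSpace Ω] (P : Measure Ω) [IsProbabilityMeasure P]
    {𝒳 : Type*} [MeasurableSpace 𝒳]
    (n K : ℕ)
    (Z : Fin (n + 1) → Ω → 𝒳 × Fin K)
    (hmeas : ∀ i, Measurable (Z i))
    (hexch : ∀ σ : Equiv.Perm (Fin (n + 1)),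
      Measure.map (fun ω i => Z (σ i) ω) P = Measure.map (fun ω i => Z i ω) P)
    (s : 𝒳 × Fin K → ℝ) (hs : Measurable s)
    (hdist : ∀ᵐ ω ∂P, Function.Injective (fun i : Fin (n + 1) => s (Z i ω)))
    (p : Ω → Fin K → ℝ)
    (hp : ∀ ω y, p ω y =
      (((Finset.univ.filter
          (fun i : Fin n => s (Z i.castSucc ω) ≤ s ((Z (Fin.last n) ω).1, y))).card : ℝ) + 1)
        / (n + 1))
    (α : ℝ) (hα : α ∈ Set.Ioo (0 : ℝ) 1) :
    ENNReal.ofReal (α - 1 / (n + 1)) ≤ P {ω | p ω ((Z (Fin.last n) ω).2) ≤ α} := by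
  have hN : (0 : ℝ) < n + 1 := by positivity
  set m := ⌊α * (n + 1)⌋₊
  have hm : m ≤ Fintype.card (Fin (n + 1)) := by
    rw [Fintype.card_fin]
    exact Nat.floor_le_of_le (by push_cast; nlinarith [hα.2])
  have hevent : {ω | p ω ((Z (Fin.last n) ω).2) ≤ α} =
      {ω | Conformal.rank (fun i => s (Z i ω)) (Fin.last n) ≤ m} := by
    ext ω
    rw [Set.mem_ofPred_eq, Set.mem_ofPred_eq, Conformal.rank_last, hp, div_le_iff₀ hN,
      Nat.le_floor_iff' (Nat.succ_ne_zero _)]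
    push_cast
    rfl
  have hbound := Conformal.le_card_mul_measure_rank_le hmeas hexch hs hdist hm (Fin.last n)
  rw [Fintype.card_fin] at hbound
  rw [hevent]
  calc ENNReal.ofReal (α - 1 / (n + 1))
      ≤ ENNReal.ofReal (m / (n + 1)) := by
        refine ENNReal.ofReal_le_ofReal ?_
        rw [sub_le_iff_le_add, ← add_div, le_div_iff₀ hN]
        linarith [Nat.lt_floor_add_one (α * (n + 1))]
    _ = m / (n + 1 : ℕ) := by
        rw [ENNReal.ofReal_div_of_pos hN, ← Nat.cast_succ, ENNReal.ofReal_natCast,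
          ENNReal.ofReal_natCast]
    _ ≤ _ := ENNReal.div_le_of_le_mul' hbound

/-- Proposition 3, Procedure 3, lower bound: if moreover the scores
`s(X_i, Y_i)`, `i = n+1, ..., 2n+1`, are a.s. pairwise distinct, the single-step procedure
satisfies `FWER = P(p(X_{2n+1}, Y_{2n+1}) ≤ α) ≥ α − 1/(n+1)`. -/
theorem procedure3_fwer_lower_bound
    {Ω : Type*} [MeasurableSpace Ω] (P : Measure Ω) [IsProbabilityMeasure P]
    {𝒳 : Type*} [MeasurableSpace 𝒳]
    (n K : ℕ) (hn : 1 ≤ n) (hK : 1 ≤ K)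
    (Z : Fin (n + 1) → Ω → 𝒳 × Fin K)
    (hmeas : ∀ i, Measurable (Z i))
    (hexch : ∀ σ : Equiv.Perm (Fin (n + 1)),
      Measure.map (fun ω i => Z (σ i) ω) P = Measure.map (fun ω i => Z i ω) P)
    (s : 𝒳 × Fin K → ℝ) (hs : Measurable s)
    (hdist : ∀ᵐ ω ∂P, Function.Injective (fun i : Fin (n + 1) => s (Z i ω)))
    (p : Ω → Fin K → ℝ)
    (hp : ∀ ω y, p ω y =
      (((Finset.univ.filter
          (fun i : Fin n => s (Z i.castSucc ω) ≤ s ((Z (Fin.last n) ω).1, y))).card : ℝ) + 1)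
        / (n + 1))
    (α : ℝ) (hα : α ∈ Set.Ioo (0 : ℝ) 1) :
    ENNReal.ofReal (α - 1 / (n + 1)) ≤ P {ω | p ω ((Z (Fin.last n) ω).2) ≤ α} :=
  procedure3_fwer_lower_bound_general P n K Z hmeas hexch s hs hdist p hp α hα
end

section
/- Let n ≥ 1, let 𝒴 = {1, ..., K} with K ≥ 1, and let (X_i, Y_i), i = n+1, ..., 2n+1, be random variables with values in 𝒳 × 𝒴 whose joint distribution is exchangeable. Fix a measurable score function s : 𝒳 × 𝒴 → ℝ, define p(X_{2n+1}, y) = (Σ_{i=n+1}^{2n} 1{s(X_i, Y_i) ≤ s(X_{2n+1}, y)} + 1)/(n+1), and suppose the scores s(X_{n+1}, Y_{n+1}), ..., s(X_{2n}, Y_{2n}), s(X_{2n+1}, Y_{2n+1}) are almost surely pairwise distinct. Fix α ∈ (0,1) and define C(X_{2n+1}) = {y ∈ 𝒴 : p(X_{2n+1}, y) > α}. Then P(Y_{2n+1} ∈ C(X_{2n+1})) ≤ 1 − α + 1/(n+1). -/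
open MeasureTheory ProbabilityTheory
open scoped ENNReal

lemma rank_lt_rank {m : ℕ} (W : Fin m → ℝ) {a b : Fin m} (h : W a < W b) :
    (Finset.univ.filter fun i => W i ≤ W a).card <
      (Finset.univ.filter fun i => W i ≤ W b).card := by
  apply Finset.card_lt_card
  constructor
  · intro i hi
    simp only [Finset.mem_filter, Finset.mem_univ, true_and] at *
    exact hi.trans h.le
  · intro hsub
    have hb : b ∈ Finset.univ.filter fun i => W i ≤ W b := by simp
    have := hsub hb
    simp only [Finset.mem_filter, Finset.mem_univ, true_and] at this
    exact absurd this (not_le.mpr h)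

lemma rank_injective {m : ℕ} {W : Fin m → ℝ} (hW : Function.Injective W) :
    Function.Injective (fun j => (Finset.univ.filter fun i => W i ≤ W j).card) := by
  intro a b hab
  by_contra hne
  rcases lt_or_gt_of_ne (fun h : W a = W b => hne (hW h)) with h | h
  · exact absurd hab (Nat.ne_of_lt (rank_lt_rank W h))
  · exact absurd hab.symm (Nat.ne_of_lt (rank_lt_rank W h))

lemma rank_mem_Icc {m : ℕ} (W : Fin m → ℝ) (j : Fin m) :
    (Finset.univ.filter fun i => W i ≤ W j).card ∈ Finset.Icc 1 m := by
  simp only [Finset.mem_Icc]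
  constructor
  · exact Finset.card_pos.mpr ⟨j, by simp⟩
  · simpa using Finset.card_filter_le Finset.univ (fun i => W i ≤ W j)

lemma rank_surjective {m : ℕ} {W : Fin m → ℝ} (hW : Function.Injective W)
    {k : ℕ} (hk : k ∈ Finset.Icc 1 m) :
    ∃ j, (Finset.univ.filter fun i => W i ≤ W j).card = k := by
  set r : Fin m → ℕ := fun j => (Finset.univ.filter fun i => W i ≤ W j).card with hr
  have himg : Finset.univ.image r = Finset.Icc 1 m := by
    apply Finset.eq_of_subset_of_card_le
    · intro x hx
      simp only [Finset.mem_image] at hx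
      obtain ⟨j, _, rfl⟩ := hx
      exact rank_mem_Icc W j
    · rw [Finset.card_image_of_injective _ (rank_injective hW)]
      simp [Nat.card_Icc]
  rw [← himg] at hk
  simpa using Finset.mem_image.mp hk

lemma card_reindex {m : ℕ} (σ : Equiv.Perm (Fin m)) (Q : Fin m → Prop) [DecidablePred Q] :
    (Finset.univ.filter fun i => Q (σ i)).card = (Finset.univ.filter Q).card := by
  apply Finset.card_bij (fun a _ => σ a)
  · intro a ha; simp only [Finset.mem_filter, Finset.mem_univ, true_and] at *; exact ha
  · intro a _ b _ h; exact σ.injective h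
  · intro b hb
    refine ⟨σ.symm b, ?_, by simp⟩
    simp only [Finset.mem_filter, Finset.mem_univ, true_and, Equiv.apply_symm_apply] at *
    exact hb

lemma card_meas {m : ℕ} {β : Type*} [MeasurableSpace β] (s : β → ℝ) (hs : Measurable s)
    (j : Fin m) :
    Measurable (fun v : Fin m → β => (Finset.univ.filter fun i => s (v i) ≤ s (v j)).card) := by
  have : (fun v : Fin m → β => (Finset.univ.filter fun i => s (v i) ≤ s (v j)).card)
      = fun v => ∑ i : Fin m, if s (v i) ≤ s (v j) then 1 else 0 := by
    funext v; rw [Finset.card_filter]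
  rw [this]
  apply Finset.measurable_sum
  intro i _
  exact Measurable.ite (measurableSet_le (hs.comp (measurable_pi_apply i))
    (hs.comp (measurable_pi_apply j))) measurable_const measurable_const

lemma rank_split {n : ℕ} (W : Fin (n+1) → ℝ) :
    (Finset.univ.filter fun i => W i ≤ W (Fin.last n)).card
      = (Finset.univ.filter fun i : Fin n => W i.castSucc ≤ W (Fin.last n)).card + 1 := by
  rw [Finset.card_filter, Finset.card_filter, Fin.sum_univ_castSucc]
  simp

/-- Theorem 1, Algorithm 2, upper bound: if the scores
`s(X_i, Y_i)`, `i = n+1, ..., 2n+1`, are a.s. pairwise distinct, the ordinal prediction set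
`C(X_{2n+1}) = {y : p(X_{2n+1}, y) > α}` satisfies
`P(Y_{2n+1} ∈ C(X_{2n+1})) ≤ 1 − α + 1/(n+1)`. -/
theorem ordinal_prediction_set_coverage_upper_bound
    {Ω : Type*} [MeasurableSpace Ω] (P : Measure Ω) [IsProbabilityMeasure P]
    {𝒳 : Type*} [MeasurableSpace 𝒳]
    (n K : ℕ) (hn : 1 ≤ n) (hK : 1 ≤ K)
    (Z : Fin (n + 1) → Ω → 𝒳 × Fin K)
    (hmeas : ∀ i, Measurable (Z i))
    (hexch : ∀ σ : Equiv.Perm (Fin (n + 1)),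
      Measure.map (fun ω i => Z (σ i) ω) P = Measure.map (fun ω i => Z i ω) P)
    (s : 𝒳 × Fin K → ℝ) (hs : Measurable s)
    (hdist : ∀ᵐ ω ∂P, Function.Injective (fun i : Fin (n + 1) => s (Z i ω)))
    (p : Ω → Fin K → ℝ)
    (hp : ∀ ω y, p ω y =
      (((Finset.univ.filter
          (fun i : Fin n => s (Z i.castSucc ω) ≤ s ((Z (Fin.last n) ω).1, y))).card : ℝ) + 1)
        / (n + 1))
    (α : ℝ) (hα : α ∈ Set.Ioo (0 : ℝ) 1) :
    P {ω | α < p ω ((Z (Fin.last n) ω).2)} ≤ ENNReal.ofReal (1 - α + 1 / (n + 1)) := by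
  obtain ⟨hα0, hα1⟩ := hα
  -- the event family
  set E : Fin (n+1) → ℕ → Set Ω := fun j k =>
    {ω | (Finset.univ.filter fun i => s (Z i ω) ≤ s (Z j ω)).card = k} with hE
  have hZvec : Measurable (fun ω i => Z i ω) := measurable_pi_lambda _ hmeas
  have hEmeas : ∀ j k, MeasurableSet (E j k) := by
    intro j k
    have : E j k = (fun ω => (Finset.univ.filter
        fun i => s (Z i ω) ≤ s (Z j ω)).card) ⁻¹' {k} := rfl
    rw [this]
    exact ((card_meas s hs j).comp hZvec) (measurableSet_singleton k)
  -- exchangeability: all indices have the same rank distribution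
  have hEeq : ∀ j k, P (E j k) = P (E (Fin.last n) k) := by
    intro j k
    set σ : Equiv.Perm (Fin (n+1)) := Equiv.swap (Fin.last n) j with hσdef
    set S : Set (Fin (n+1) → 𝒳 × Fin K) := (fun v : Fin (n+1) → 𝒳 × Fin K =>
      (Finset.univ.filter fun i => s (v i) ≤ s (v (Fin.last n))).card) ⁻¹' {k} with hSdef
    have hS : MeasurableSet S := (card_meas s hs _) (measurableSet_singleton k)
    have h1 : Measure.map (fun ω i => Z (σ i) ω) P S = Measure.map (fun ω i => Z i ω) P S := by
      rw [hexch σ]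
    rw [Measure.map_apply (measurable_pi_lambda _ fun i => hmeas (σ i)) hS,
      Measure.map_apply hZvec hS] at h1
    have hR : (fun ω i => Z i ω) ⁻¹' S = E (Fin.last n) k := rfl
    have hL : (fun ω i => Z (σ i) ω) ⁻¹' S = E j k := by
      ext ω
      have hσl : σ (Fin.last n) = j := Equiv.swap_apply_left _ _
      simp only [hSdef, Set.mem_preimage, Set.mem_singleton_iff, hE, Set.mem_setOf_eq, hσl]
      rw [card_reindex σ (fun i => s (Z i ω) ≤ s (Z j ω))]
    rw [hL, hR] at h1
    exact h1
  -- the full-measure injectivity event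
  set G : Set Ω := {ω | Function.Injective fun i : Fin (n+1) => s (Z i ω)} with hGdef
  have hGmeas : MeasurableSet G := by
    have : G = ⋂ (i : Fin (n+1)), ⋂ (j : Fin (n+1)), ⋂ (_ : i ≠ j),
        {ω | s (Z i ω) ≠ s (Z j ω)} := by
      ext ω
      simp only [hGdef, Set.mem_setOf_eq, Set.mem_iInter, Function.Injective]
      constructor
      · intro h i j hij heq; exact hij (h heq)
      · intro h i j heq
        by_contra hij
        exact h i j hij heq
    rw [this]
    refine MeasurableSet.iInter fun i => MeasurableSet.iInter fun j =>
      MeasurableSet.iInter fun _ => ?_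
    exact (measurableSet_eq_fun (hs.comp (hmeas i)) (hs.comp (hmeas j))).compl
  have hGc : P Gᶜ = 0 := by
    have := ae_iff.mp hdist
    simpa [hGdef, Set.compl_setOf] using this
  have hinter : ∀ A : Set Ω, P (A ∩ G) = P A := fun A => measure_inter_conull hGc
  have hG1 : P G = 1 := (prob_compl_eq_zero_iff hGmeas).mp hGc
  -- the rank of the last point is uniform on {1, ..., n+1}
  have hunif : ∀ k ∈ Finset.Icc 1 (n+1), P (E (Fin.last n) k) = (((n+1 : ℕ) : ℝ≥0∞))⁻¹ := by
    intro k hk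
    have hdisj : Pairwise (Function.onFun Disjoint fun j => E j k ∩ G) := by
      intro a b hab
      rw [Function.onFun, Set.disjoint_left]
      rintro ω ⟨ha, hG⟩ ⟨hb, _⟩
      exact hab (rank_injective hG (ha.trans hb.symm))
    have hcover : (⋃ j, (E j k ∩ G)) = G := by
      ext ω
      simp only [Set.mem_iUnion, Set.mem_inter_iff]
      constructor
      · rintro ⟨j, _, hω⟩; exact hω
      · intro hω
        obtain ⟨j, hj⟩ := rank_surjective hω hk
        exact ⟨j, hj, hω⟩
    have hsum := measure_iUnion (μ := P) hdisj (fun j => (hEmeas j k).inter hGmeas)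
    rw [hcover, hG1, tsum_fintype] at hsum
    have hterm : ∀ j : Fin (n+1), P (E j k ∩ G) = P (E (Fin.last n) k) := fun j => by
      rw [hinter, hEeq]
    rw [Finset.sum_congr rfl (fun j _ => hterm j), Finset.sum_const, Finset.card_univ,
      Fintype.card_fin, nsmul_eq_mul] at hsum
    have hne : ((n+1 : ℕ) : ℝ≥0∞) ≠ 0 := by simp
    have hnt : ((n+1 : ℕ) : ℝ≥0∞) ≠ ⊤ := by simp
    calc P (E (Fin.last n) k)
        = ((n+1 : ℕ) : ℝ≥0∞)⁻¹ * (((n+1 : ℕ) : ℝ≥0∞) * P (E (Fin.last n) k)) := by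
          rw [← mul_assoc, ENNReal.inv_mul_cancel hne hnt, one_mul]
      _ = ((n+1 : ℕ) : ℝ≥0∞)⁻¹ := by rw [← hsum, mul_one]
  have hnpos : (0:ℝ) < (n:ℝ) + 1 := by positivity
  -- rewrite the target event as a union of rank events
  set F : Finset ℕ := (Finset.Icc 1 (n+1)).filter (fun k => α * ((n:ℝ)+1) < (k:ℝ)) with hF
  have hTset : {ω | α < p ω ((Z (Fin.last n) ω).2)} = ⋃ k ∈ F, E (Fin.last n) k := by
    ext ω
    have hpe : p ω ((Z (Fin.last n) ω).2) =
        (((Finset.univ.filter fun i : Fin n =>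
          s (Z i.castSucc ω) ≤ s (Z (Fin.last n) ω)).card : ℝ) + 1) / ((n:ℝ)+1) := by
      rw [hp]
    set c := (Finset.univ.filter fun i : Fin n =>
      s (Z i.castSucc ω) ≤ s (Z (Fin.last n) ω)).card with hc
    have hrk : (Finset.univ.filter fun i : Fin (n+1) =>
        s (Z i ω) ≤ s (Z (Fin.last n) ω)).card = c + 1 := rank_split (fun i => s (Z i ω))
    simp only [Set.mem_setOf_eq, Set.mem_iUnion, hE]
    constructor
    · intro h
      refine ⟨c+1, ?_, hrk⟩
      simp only [hF, Finset.mem_filter, Finset.mem_Icc]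
      have hcle : c ≤ n := by
        simpa using Finset.card_filter_le Finset.univ
          (fun i : Fin n => s (Z i.castSucc ω) ≤ s (Z (Fin.last n) ω))
      refine ⟨⟨Nat.le_add_left 1 c, Nat.succ_le_succ hcle⟩, ?_⟩
      rw [hpe, lt_div_iff₀ hnpos] at h
      push_cast
      linarith
    · rintro ⟨k, hkF, hkE⟩
      simp only [hF, Finset.mem_filter, Finset.mem_Icc] at hkF
      rw [hpe, lt_div_iff₀ hnpos]
      have hck : c + 1 = k := by rw [← hrk]; exact hkE
      have := hkF.2
      rw [← hck] at this
      push_cast at this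
      linarith
  -- bound the cardinality of F
  have hcard : F.card ≤ (n+1) - ⌊α * ((n:ℝ)+1)⌋₊ := by
    have hsub : F ⊆ Finset.Icc (⌊α * ((n:ℝ)+1)⌋₊ + 1) (n+1) := by
      intro k hk
      simp only [hF, Finset.mem_filter, Finset.mem_Icc] at hk ⊢
      exact ⟨(Nat.floor_lt (by positivity)).mpr hk.2, hk.1.2⟩
    calc F.card ≤ (Finset.Icc (⌊α * ((n:ℝ)+1)⌋₊ + 1) (n+1)).card := Finset.card_le_card hsub
      _ = (n+1) + 1 - (⌊α * ((n:ℝ)+1)⌋₊ + 1) := Nat.card_Icc _ _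
      _ = (n+1) - ⌊α * ((n:ℝ)+1)⌋₊ := by omega
  -- put everything together
  calc P {ω | α < p ω ((Z (Fin.last n) ω).2)}
      = P (⋃ k ∈ F, E (Fin.last n) k) := by rw [hTset]
    _ ≤ ∑ k ∈ F, P (E (Fin.last n) k) := measure_biUnion_finset_le F _
    _ = ∑ _k ∈ F, (((n+1 : ℕ) : ℝ≥0∞))⁻¹ :=
        Finset.sum_congr rfl (fun k hk => hunif k (Finset.mem_filter.mp hk).1)
    _ = F.card * (((n+1 : ℕ) : ℝ≥0∞))⁻¹ := by rw [Finset.sum_const, nsmul_eq_mul]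
    _ = ENNReal.ofReal ((F.card : ℝ) / ((n:ℝ)+1)) := by
        rw [ENNReal.ofReal_div_of_pos hnpos, div_eq_mul_inv]
        congr 1
        · rw [ENNReal.ofReal_natCast]
        · congr 1
          rw [show ((n:ℝ)+1) = ((n+1 : ℕ) : ℝ) by push_cast; ring, ENNReal.ofReal_natCast]
    _ ≤ ENNReal.ofReal (1 - α + 1 / ((n:ℝ) + 1)) := by
        apply ENNReal.ofReal_le_ofReal
        rw [div_le_iff₀ hnpos]
        have h1 : (F.card : ℝ) ≤ ((n+1) - ⌊α * ((n:ℝ)+1)⌋₊ : ℕ) := by exact_mod_cast hcard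
        have hble : ⌊α * ((n:ℝ)+1)⌋₊ ≤ n + 1 := by
          have : α * ((n:ℝ)+1) < ((n+1 : ℕ) : ℝ) := by
            push_cast
            nlinarith
          exact ((Nat.floor_lt (by positivity)).mpr this).le
        have h2 : (((n+1) - ⌊α * ((n:ℝ)+1)⌋₊ : ℕ) : ℝ) = ((n+1 : ℕ) : ℝ) - (⌊α * ((n:ℝ)+1)⌋₊ : ℝ) := by
          exact_mod_cast Nat.cast_sub hble
        have h3 : α * ((n:ℝ)+1) - 1 < (⌊α * ((n:ℝ)+1)⌋₊ : ℝ) := by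
          have := Nat.lt_floor_add_one (α * ((n:ℝ)+1))
          linarith
        have h4 : ((n+1 : ℕ) : ℝ) = (n:ℝ) + 1 := by push_cast; ring
        have h5 : (1 - α + 1 / ((n:ℝ) + 1)) * ((n:ℝ)+1) = (1-α) * ((n:ℝ)+1) + 1 := by
          field_simp
        rw [h5]
        nlinarith
end

section
/- Let n ≥ 1, let 𝒴 = {1, ..., K} with K ≥ 1, and let (X_i, Y_i), i = 1, ..., 2n+1, be random variables with values in 𝒳 × 𝒴 whose joint distribution is exchangeable. Fix a measurable score function s : 𝒳 × 𝒴 → ℝ. For y ∈ 𝒴 let I_y = {i ∈ {n+1,...,2n} : Y_i = y}, n_y = |I_y|, and define p(X_{2n+1}|y) = (Σ_{i ∈ I_y} 1{s(X_i, y) ≤ s(X_{2n+1}, y)} + 1)/(n_y + 1). Fix y ∈ 𝒴 and a subset I ⊆ {n+1,...,2n} with |I| = m such that P(I_y = I, Y_{2n+1} = y) > 0, and suppose that on this event the scores {s(X_i, y) : i ∈ I} ∪ {s(X_{2n+1}, y)} are almost surely pairwise distinct. Then for every α ∈ (0,1), P(p(X_{2n+1}|y) ≤ α | I_y = I, Y_{2n+1}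 = y) ≥ α − 1/(m+1). -/
/-!
On the event `{I_y = I, Y_{2n+1} = y}` the p-value is `r / (m + 1)`, where `r` is the rank of the
test score among the scores indexed by `J = I ∪ {2n+1}`. Swapping the test point with a
calibration point `j ∈ I` preserves the event and exchanges the ranks of the two points, so by
exchangeability all points of `J` have rank `k` with the same probability on the event. The scores
being a.s. distinct, exactly one point has rank `k`, so each rank `k ≤ m + 1` has conditional
probability `1 / (m + 1)`, and
`P(p ≤ α | ·) ≥ ⌊α (m + 1)⌋ / (m + 1) ≥ α - 1 / (m + 1)`.
-/

open MeasureTheory ProbabilityTheory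
open scoped ENNReal

namespace Finset

variable {ι α : Type*} [LinearOrder α]

def rank (J : Finset ι) (f : ι → α) (j : ι) : ℕ := #{i ∈ J | f i ≤ f j}

variable {J : Finset ι} {f : ι → α}

lemma rank_mem_Icc {j : ι} (hj : j ∈ J) : J.rank f j ∈ Icc 1 #J :=
  mem_Icc.2 ⟨card_pos.2 ⟨j, mem_filter.2 ⟨hj, le_rfl⟩⟩, card_filter_le _ _⟩

lemma rank_lt_rank {a b : ι} (hb : b ∈ J) (h : f a < f b) : J.rank f a < J.rank f b :=
  card_lt_card <| (ssubset_iff_of_subset fun _ hi => mem_filter.2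
    ⟨(mem_filter.1 hi).1, (mem_filter.1 hi).2.trans h.le⟩).2
    ⟨b, mem_filter.2 ⟨hb, le_rfl⟩, fun hb' => (mem_filter.1 hb').2.not_gt h⟩

lemma injOn_rank (hf : Set.InjOn f J) : Set.InjOn (J.rank f) J := by
  intro a ha b hb hab
  by_contra hne
  rcases (hf.ne ha hb hne).lt_or_gt with h | h
  · exact (rank_lt_rank hb h).ne hab
  · exact (rank_lt_rank ha h).ne' hab

lemma image_rank (hf : Set.InjOn f J) : J.image (J.rank f) = Icc 1 #J :=
  eq_of_subset_of_card_le (image_subset_iff.2 fun _ => rank_mem_Icc) <| by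
    rw [Nat.card_Icc, card_image_of_injOn (injOn_rank hf), Nat.add_sub_cancel]

lemma existsUnique_rank_eq (hf : Set.InjOn f J) {k : ℕ} (hk : k ∈ Icc 1 #J) :
    ∃! j, j ∈ J ∧ J.rank f j = k := by
  obtain ⟨j, hj, rfl⟩ := mem_image.1 ((image_rank hf).symm ▸ hk)
  exact ⟨j, ⟨hj, rfl⟩, fun i hi => injOn_rank hf hi.1 hj hi.2⟩

lemma rank_comp_perm {σ : Equiv.Perm ι} (hσ : ∀ i, σ i ∈ J ↔ i ∈ J) (j : ι) :
    J.rank (f ∘ σ) j = J.rank f (σ j) :=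
  card_nbij' σ σ.symm (fun _ hi => by simp_all) (fun i hi => by simp_all [← hσ (σ.symm i)])
    (fun _ _ => by simp) (fun _ _ => by simp)

lemma rank_insert_self [DecidableEq ι] {a : ι} (ha : a ∉ J) :
    (insert a J).rank f a = #{i ∈ J | f i ≤ f a} + 1 := by
  rw [rank, filter_insert, if_pos le_rfl, card_insert_of_notMem (fun h => ha (mem_filter.1 h).1)]

end Finset

lemma measurable_rank {α ι : Type*} [MeasurableSpace α] {f : ι → α → ℝ}
    (hf : ∀ i, Measurable (f i)) (J : Finset ι) (j : ι) :
    Measurable fun x => J.rank (fun i => f i x) j := by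
  simp only [Finset.rank, Finset.card_filter]
  exact Finset.measurable_sum _ fun i _ =>
    Measurable.ite (measurableSet_le (hf i) (hf j)) measurable_const measurable_const

lemma filter_comp_swap_eq_and_iff {ι γ : Type*} [DecidableEq ι] [DecidableEq γ]
    {D I : Finset ι} {a b : ι} (hb : b ∈ I) (Y : ι → γ) (y : γ) :
    ({i ∈ D | Y (Equiv.swap a b i) = y} = I ∧ Y (Equiv.swap a b a) = y) ↔
      ({i ∈ D | Y i = y} = I ∧ Y a = y) := by
  have hI : ∀ Y' : ι → γ, {i ∈ D | Y' i = y} = I → Y' b = y :=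
    fun Y' h => (Finset.mem_filter.1 (h ▸ hb : b ∈ {i ∈ D | Y' i = y})).2
  have hswap : Y a = y → Y b = y → ∀ i, Y (Equiv.swap a b i) = Y i := fun ha hb i => by
    rw [Equiv.swap_apply_def]
    split_ifs <;> simp_all
  constructor
  · rintro ⟨h, ha⟩
    rw [Equiv.swap_apply_left] at ha
    have hb' := hI _ h
    rw [Equiv.swap_apply_right] at hb'
    simp only [hswap hb' ha] at h
    exact ⟨h, hb'⟩
  · rintro ⟨h, ha⟩
    simp only [hswap ha (hI _ h)]
    exact ⟨h, ha⟩

section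

variable {Ω : Type*} [MeasurableSpace Ω] {P : Measure Ω}

lemma sum_measure_inter_eq_of_ae_existsUnique {ι : Type*} {J : Finset ι} {E : Set Ω}
    {A : ι → Set Ω} (hE : MeasurableSet E) (hA : ∀ j ∈ J, MeasurableSet (A j))
    (h : ∀ᵐ ω ∂P, ω ∈ E → ∃! j, j ∈ J ∧ ω ∈ A j) :
    ∑ j ∈ J, P (E ∩ A j) = P E := by
  have hdisj : (J : Set ι).Pairwise fun a b => AEDisjoint P (E ∩ A a) (E ∩ A b) := by
    intro a ha b hb hab
    rw [AEDisjoint, measure_eq_zero_iff_ae_notMem]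
    filter_upwards [h] with ω hω ⟨⟨hωE, hωa⟩, _, hωb⟩
    exact hab ((hω hωE).unique ⟨ha, hωa⟩ ⟨hb, hωb⟩)
  rw [← measure_biUnion_finset₀ hdisj fun j hj => (hE.inter (hA j hj)).nullMeasurableSet]
  refine measure_congr (Filter.eventuallyEq_set.2 ?_)
  filter_upwards [h] with ω hω
  simp only [Set.mem_iUnion, Set.mem_inter_iff, exists_prop]
  exact ⟨fun ⟨_, _, hωE, _⟩ => hωE,
    fun hωE => (hω hωE).exists.imp fun j hj => ⟨hj.1, hωE, hj.2⟩⟩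

lemma ofReal_sub_le_cond_of_measure_inter_eq_div [IsFiniteMeasure P] {E : Set Ω}
    (hE : MeasurableSet E) (hPE : P E ≠ 0)
    {N : ℕ} (hN : 0 < N) {r : Ω → ℕ} (hr : Measurable r)
    (hunif : ∀ k ∈ Finset.Icc 1 N, P (E ∩ {ω | r ω = k}) = P E / N)
    {q : Ω → ℝ} (hq : ∀ ω ∈ E, q ω = r ω / N) {α : ℝ} (hα : α ≤ 1) :
    ENNReal.ofReal (α - 1 / N) ≤ P[|E] {ω | q ω ≤ α} := by
  set k₀ := ⌊α * N⌋₊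
  have hNpos : (0 : ℝ) < N := Nat.cast_pos.2 hN
  have hk₀N : k₀ ≤ N := Nat.floor_le_of_le (mul_le_of_le_one_left hNpos.le hα)
  have hsub : ⋃ k ∈ Finset.Icc 1 k₀, E ∩ {ω | r ω = k} ⊆ E ∩ {ω | q ω ≤ α} := by
    simp only [Set.iUnion_subset_iff, Finset.mem_Icc]
    rintro k ⟨hk1, hk⟩ ω ⟨hωE, rfl⟩
    refine ⟨hωE, ?_⟩
    show q ω ≤ α
    rw [hq ω hωE, div_le_iff₀ hNpos, ← Nat.le_floor_iff' (by omega)]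
    exact hk
  have hunion : P (⋃ k ∈ Finset.Icc 1 k₀, E ∩ {ω | r ω = k}) = k₀ * (P E / N) := by
    rw [measure_biUnion_finset (f := fun k => E ∩ {ω | r ω = k})
      (fun k _ l _ hkl => Set.disjoint_left.2 fun ω hk hl => hkl (hk.2.symm.trans hl.2))
      fun k _ => hE.inter (hr (measurableSet_singleton k)),
      Finset.sum_congr rfl fun k hk => hunif k (Finset.mem_Icc.2
        ⟨(Finset.mem_Icc.1 hk).1, (Finset.mem_Icc.1 hk).2.trans hk₀N⟩),
      Finset.sum_const, Nat.card_Icc, Nat.add_sub_cancel, nsmul_eq_mul]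
  calc ENNReal.ofReal (α - 1 / N)
      ≤ ENNReal.ofReal (k₀ / N) := ENNReal.ofReal_le_ofReal <| by
        rw [sub_le_iff_le_add, ← add_div, le_div_iff₀ hNpos]
        linarith [Nat.lt_floor_add_one (α * N)]
    _ = (P E)⁻¹ * (k₀ * (P E / N)) := by
        rw [mul_left_comm, div_eq_mul_inv (P E),
          ENNReal.inv_mul_cancel_left hPE (measure_ne_top P E), ← div_eq_mul_inv,
          ENNReal.ofReal_div_of_pos hNpos, ENNReal.ofReal_natCast, ENNReal.ofReal_natCast]
    _ ≤ (P E)⁻¹ * P (E ∩ {ω | q ω ≤ α}) := by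
        gcongr
        exact hunion ▸ measure_mono hsub
    _ = P[|E] {ω | q ω ≤ α} := (cond_apply hE P _).symm

variable {ι β : Type*} [MeasurableSpace β] {Z : ι → Ω → β}

lemma measure_preimage_comp_perm (hZ : ∀ i, Measurable (Z i))
    (hexch : ∀ σ : Equiv.Perm ι,
      Measure.map (fun ω i => Z (σ i) ω) P = Measure.map (fun ω i => Z i ω) P)
    (σ : Equiv.Perm ι) {S : Set (ι → β)} (hS : MeasurableSet S) :
    P ((fun ω i => Z (σ i) ω) ⁻¹' S) = P ((fun ω i => Z i ω) ⁻¹' S) := by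
  rw [← Measure.map_apply (measurable_pi_lambda _ fun i => hZ (σ i)) hS,
    ← Measure.map_apply (measurable_pi_lambda _ hZ) hS, hexch σ]

lemma measure_inter_rank_eq_of_swap [DecidableEq ι] (hZ : ∀ i, Measurable (Z i))
    (hexch : ∀ σ : Equiv.Perm ι,
      Measure.map (fun ω i => Z (σ i) ω) P = Measure.map (fun ω i => Z i ω) P)
    {g : β → ℝ} (hg : Measurable g) {J : Finset ι} {a b : ι} (ha : a ∈ J) (hb : b ∈ J)
    {S : Set (ι → β)} (hS : MeasurableSet S)
    (hSswap : ∀ z, z ∘ Equiv.swap a b ∈ S ↔ z ∈ S) (k : ℕ) :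
    P ((fun ω i => Z i ω) ⁻¹' S ∩ {ω | J.rank (fun i => g (Z i ω)) b = k}) =
      P ((fun ω i => Z i ω) ⁻¹' S ∩ {ω | J.rank (fun i => g (Z i ω)) a = k}) := by
  set T : Set (ι → β) := S ∩ {z | J.rank (fun i => g (z i)) a = k}
  have hT : MeasurableSet T :=
    hS.inter (measurable_rank (fun i => hg.comp (measurable_pi_apply i)) J a
      (measurableSet_singleton k))
  have hswapJ : ∀ i, Equiv.swap a b i ∈ J ↔ i ∈ J := fun i => by
    rcases eq_or_ne i a with rfl | hia
    · simp [ha, hb]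
    rcases eq_or_ne i b with rfl | hib
    · simp [ha, hb]
    · rw [Equiv.swap_apply_of_ne_of_ne hia hib]
  have hpre : (fun ω i => Z i ω) ⁻¹' S ∩ {ω | J.rank (fun i => g (Z i ω)) b = k} =
      (fun ω i => Z (Equiv.swap a b i) ω) ⁻¹' T := by
    ext ω
    change _ ↔ (fun i => Z i ω) ∘ Equiv.swap a b ∈ S ∧
      J.rank ((fun i => g (Z i ω)) ∘ Equiv.swap a b) a = k
    rw [hSswap, Finset.rank_comp_perm hswapJ, Equiv.swap_apply_left]
    rfl
  rw [hpre, measure_preimage_comp_perm hZ hexch _ hT]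
  rfl

lemma measure_inter_rank_eq_div_card [DecidableEq ι] (hZ : ∀ i, Measurable (Z i))
    (hexch : ∀ σ : Equiv.Perm ι,
      Measure.map (fun ω i => Z (σ i) ω) P = Measure.map (fun ω i => Z i ω) P)
    {g : β → ℝ} (hg : Measurable g) {J : Finset ι} {a : ι} (ha : a ∈ J)
    {S : Set (ι → β)} (hS : MeasurableSet S)
    (hSswap : ∀ b ∈ J, ∀ z, z ∘ Equiv.swap a b ∈ S ↔ z ∈ S)
    (hinj : ∀ᵐ ω ∂P, (fun i => Z i ω) ∈ S → Set.InjOn (fun i => g (Z i ω)) J) :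
    ∀ k ∈ Finset.Icc 1 J.card,
      P ((fun ω i => Z i ω) ⁻¹' S ∩ {ω | J.rank (fun i => g (Z i ω)) a = k}) =
        P ((fun ω i => Z i ω) ⁻¹' S) / J.card := by
  intro k hk
  have hsum := sum_measure_inter_eq_of_ae_existsUnique (P := P)
    (A := fun b => {ω | J.rank (fun i => g (Z i ω)) b = k})
    (measurable_pi_lambda _ hZ hS)
    (fun b _ => measurable_rank (fun i => hg.comp (hZ i)) J b (measurableSet_singleton k))
    (hinj.mono fun ω h hω => Finset.existsUnique_rank_eq (h hω) hk)
  rw [Finset.sum_congr rfl fun b hb =>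
    measure_inter_rank_eq_of_swap hZ hexch hg ha hb hS (hSswap b hb) k,
    Finset.sum_const, nsmul_eq_mul] at hsum
  exact (ENNReal.eq_div_iff (by simpa using Finset.ne_empty_of_mem ha) (by simp)).2 hsum

end

theorem conditional_procedure3_fwer_lower_bound_general
    {Ω : Type*} [MeasurableSpace Ω] (P : Measure Ω) [IsProbabilityMeasure P]
    {𝒳 : Type*} [MeasurableSpace 𝒳]
    (n K : ℕ)
    (Z : Fin (2 * n + 1) → Ω → 𝒳 × Fin K)
    (hmeas : ∀ i, Measurable (Z i))
    (hexch : ∀ σ : Equiv.Perm (Fin (2 * n + 1)),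
      Measure.map (fun ω i => Z (σ i) ω) P = Measure.map (fun ω i => Z i ω) P)
    (s : 𝒳 × Fin K → ℝ) (hs : Measurable s)
    (Dcal : Finset (Fin (2 * n + 1)))
    (hDcal : Dcal = Finset.univ.filter
      (fun i : Fin (2 * n + 1) => n ≤ (i : ℕ) ∧ (i : ℕ) < 2 * n))
    (Iy : Fin K → Ω → Finset (Fin (2 * n + 1)))
    (hIy : ∀ y ω, Iy y ω = Dcal.filter (fun i => (Z i ω).2 = y))
    (p : Fin K → Ω → ℝ)
    (hp : ∀ y ω, p y ω =
      ((((Iy y ω).filter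
          (fun i => s ((Z i ω).1, y) ≤ s ((Z (Fin.last (2 * n)) ω).1, y))).card : ℝ) + 1)
        / (((Iy y ω).card : ℝ) + 1))
    (α : ℝ) (hα : α ∈ Set.Ioo (0 : ℝ) 1)
    (y : Fin K) (I : Finset (Fin (2 * n + 1))) (hI : I ⊆ Dcal)
    (m : ℕ) (hm : I.card = m)
    (hpos : 0 < P {ω | Iy y ω = I ∧ (Z (Fin.last (2 * n)) ω).2 = y})
    (hdist : ∀ᵐ ω ∂P, (Iy y ω = I ∧ (Z (Fin.last (2 * n)) ω).2 = y) →
      Set.InjOn (fun i => s ((Z i ω).1, y)) ↑(insert (Fin.last (2 * n)) I)) :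
    ENNReal.ofReal (α - 1 / (m + 1)) ≤
      P[|{ω | Iy y ω = I ∧ (Z (Fin.last (2 * n)) ω).2 = y}] {ω | p y ω ≤ α} := by
  set L := Fin.last (2 * n)
  have hLI : L ∉ I := fun h => by simpa [hDcal, L] using hI h
  set S : Set (Fin (2 * n + 1) → 𝒳 × Fin K) :=
    (fun z i => (z i).2) ⁻¹' {w | {i ∈ Dcal | w i = y} = I ∧ w L = y}
  have hE : {ω | Iy y ω = I ∧ (Z L ω).2 = y} = (fun ω i => Z i ω) ⁻¹' S := by
    ext ω
    simp [S, hIy]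
  have hS : MeasurableSet S :=
    (measurable_pi_lambda _ fun i => (measurable_pi_apply i).snd) (Set.toFinite _).measurableSet
  have hg : Measurable fun x : 𝒳 × Fin K => s (x.1, y) :=
    hs.comp (measurable_fst.prodMk measurable_const)
  have hunif := measure_inter_rank_eq_div_card hmeas hexch hg (Finset.mem_insert_self L I) hS
    (fun b hb z => by
      rcases Finset.mem_insert.1 hb with rfl | hbI
      · simp
      · exact filter_comp_swap_eq_and_iff (D := Dcal) (a := L) hbI (fun i => (z i).2) y)
    (hdist.mono fun ω h hω => h ((Set.ext_iff.1 hE ω).2 hω))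
  rw [Finset.card_insert_of_notMem hLI, hm] at hunif
  have hp_rank : ∀ ω ∈ (fun ω i => Z i ω) ⁻¹' S,
      p y ω = (insert L I).rank (fun i => s ((Z i ω).1, y)) L / (m + 1 : ℕ) := by
    intro ω hω
    rw [← hE] at hω
    rw [hp, hω.1, Finset.rank_insert_self hLI, hm]
    push_cast
    rfl
  have hbound := ofReal_sub_le_cond_of_measure_inter_eq_div (measurable_pi_lambda _ hmeas hS)
    (hE ▸ hpos.ne') m.succ_pos (measurable_rank (fun i => hg.comp (hmeas i)) _ L) hunif hp_rank
    hα.2.le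
  rw [hE]
  exact_mod_cast hbound

/-- Proposition 4, Procedure 3, lower bound: conditionally on
`{I_y = I, Y_{2n+1} = y}` (with `|I| = m`, positive probability), if the scores
`{s(X_i, y) : i ∈ I} ∪ {s(X_{2n+1}, y)}` are a.s. pairwise distinct on this event, then
`P(p(X_{2n+1}|y) ≤ α | I_y = I, Y_{2n+1} = y) ≥ α − 1/(m+1)`. -/
theorem conditional_procedure3_fwer_lower_bound
    {Ω : Type*} [MeasurableSpace Ω] (P : Measure Ω) [IsProbabilityMeasure P]
    {𝒳 : Type*} [MeasurableSpace 𝒳]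
    (n K : ℕ) (hn : 1 ≤ n) (hK : 1 ≤ K)
    (Z : Fin (2 * n + 1) → Ω → 𝒳 × Fin K)
    (hmeas : ∀ i, Measurable (Z i))
    (hexch : ∀ σ : Equiv.Perm (Fin (2 * n + 1)),
      Measure.map (fun ω i => Z (σ i) ω) P = Measure.map (fun ω i => Z i ω) P)
    (s : 𝒳 × Fin K → ℝ) (hs : Measurable s)
    (Dcal : Finset (Fin (2 * n + 1)))
    (hDcal : Dcal = Finset.univ.filter
      (fun i : Fin (2 * n + 1) => n ≤ (i : ℕ) ∧ (i : ℕ) < 2 * n))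
    (Iy : Fin K → Ω → Finset (Fin (2 * n + 1)))
    (hIy : ∀ y ω, Iy y ω = Dcal.filter (fun i => (Z i ω).2 = y))
    (p : Fin K → Ω → ℝ)
    (hp : ∀ y ω, p y ω =
      ((((Iy y ω).filter
          (fun i => s ((Z i ω).1, y) ≤ s ((Z (Fin.last (2 * n)) ω).1, y))).card : ℝ) + 1)
        / (((Iy y ω).card : ℝ) + 1))
    (α : ℝ) (hα : α ∈ Set.Ioo (0 : ℝ) 1)
    (y : Fin K) (I : Finset (Fin (2 * n + 1))) (hI : I ⊆ Dcal)
    (m : ℕ) (hm : I.card = m)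
    (hpos : 0 < P {ω | Iy y ω = I ∧ (Z (Fin.last (2 * n)) ω).2 = y})
    (hdist : ∀ᵐ ω ∂P, (Iy y ω = I ∧ (Z (Fin.last (2 * n)) ω).2 = y) →
      Set.InjOn (fun i => s ((Z i ω).1, y)) ↑(insert (Fin.last (2 * n)) I)) :
    ENNReal.ofReal (α - 1 / (m + 1)) ≤
      P[|{ω | Iy y ω = I ∧ (Z (Fin.last (2 * n)) ω).2 = y}] {ω | p y ω ≤ α} :=
  conditional_procedure3_fwer_lower_bound_general P n K Z hmeas hexch s hs Dcal hDcal Iy hIy p hp α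
    hα y I hI m hm hpos hdist
end

section
/- Let n ≥ 1, let 𝒴 = {1, ..., K} with K ≥ 1, and let (X_i, Y_i), i = 1, ..., 2n+1, be random variables with values in 𝒳 × 𝒴 whose joint distribution is exchangeable. Fix a measurable score function s : 𝒳 × 𝒴 → ℝ. For y ∈ 𝒴 let I_y = {i ∈ {n+1,...,2n} : Y_i = y}, n_y = |I_y|, and define p(X_{2n+1}|y) = (Σ_{i ∈ I_y} 1{s(X_i, y) ≤ s(X_{2n+1}, y)} + 1)/(n_y + 1). Fix α ∈ (0,1) and define the prediction set C(X_{2n+1}) = {y ∈ 𝒴 : p(X_{2n+1}|y) > α} (Algorithm 2 with conditional conformal p-values). Then for every y ∈ 𝒴 with P(Y_{2n+1} = y) > 0, P(Y_{2n+1} ∈ C(X_{2n+1}) | Y_{2n+1} = y) ≥ 1 − α. -/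
open MeasureTheory ProbabilityTheory
open scoped ENNReal

/-- Rank bound: the number of elements of `J` whose "≤-count" is at most `c`
is itself at most `c`. -/
lemma rank_count_le_s15 {ι : Type*} (J : Finset ι) (f : ι → ℝ) (c : ℝ) (hc : 0 ≤ c) :
    ((J.filter fun j => ((J.filter fun i => f i ≤ f j).card : ℝ) ≤ c).card : ℝ) ≤ c := by
  set A := J.filter fun j => ((J.filter fun i => f i ≤ f j).card : ℝ) ≤ c with hA
  rcases A.eq_empty_or_nonempty with h | h
  · simpa [h] using hc
  · obtain ⟨j, hjA, hmax⟩ := A.exists_max_image f h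
    have hj := Finset.mem_filter.mp hjA
    have hsub : A ⊆ J.filter fun i => f i ≤ f j := by
      intro a ha
      exact Finset.mem_filter.mpr ⟨(Finset.mem_filter.mp ha).1, hmax a ha⟩
    calc (A.card : ℝ) ≤ ((J.filter fun i => f i ≤ f j).card : ℝ) := by
          exact_mod_cast Finset.card_le_card hsub
      _ ≤ c := hj.2

/-- Filtering along a permutation that preserves `T` does not change the count. -/
lemma filter_card_perm {ι : Type*} (T : Finset ι) (σ : Equiv.Perm ι)
    (hσ : ∀ i ∈ T, σ i ∈ T) (hσ' : ∀ i ∈ T, σ.symm i ∈ T)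
    (Q : ι → Prop) [DecidablePred Q] :
    (T.filter fun i => Q (σ i)).card = (T.filter Q).card := by
  apply Finset.card_bij (fun i _ => σ i)
  · intro a ha
    obtain ⟨h1, h2⟩ := Finset.mem_filter.mp ha
    exact Finset.mem_filter.mpr ⟨hσ a h1, h2⟩
  · intro a _ b _ h; exact σ.injective h
  · intro b hb
    obtain ⟨h1, h2⟩ := Finset.mem_filter.mp hb
    refine ⟨σ.symm b, Finset.mem_filter.mpr ⟨hσ' b h1, ?_⟩, by simp⟩
    simpa using h2

/-- A filter-count, as a real-valued function, is measurable whenever each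
predicate defines a measurable set. -/
lemma measurable_filter_card {ι Ω' : Type*} [MeasurableSpace Ω'] (T : Finset ι)
    (g : ι → Ω' → Prop) [∀ i, DecidablePred (g i)] (hg : ∀ i, MeasurableSet {z | g i z}) :
    Measurable fun z => ((T.filter fun i => g i z).card : ℝ) := by
  have h : (fun z => ((T.filter fun i => g i z).card : ℝ))
      = fun z => ∑ i ∈ T, if g i z then (1 : ℝ) else 0 := by
    funext z
    rw [Finset.card_filter]
    push_cast [apply_ite (Nat.cast : ℕ → ℝ)]
    rfl
  rw [h]
  exact Finset.measurable_sum _ fun i _ =>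
    Measurable.ite (hg i) measurable_const measurable_const

section Aux

variable {𝒳 : Type*} {N K : ℕ}

/-- count of calibration-plus-test points with label `y`. -/
def mcnt (T : Finset (Fin N)) (y : Fin K) (z : Fin N → 𝒳 × Fin K) : ℕ :=
  (T.filter fun i => (z i).2 = y).card

/-- count of label-`y` points whose score is at most that of `j`. -/
noncomputable def rcnt (s : 𝒳 × Fin K → ℝ) (T : Finset (Fin N)) (y : Fin K)
    (j : Fin N) (z : Fin N → 𝒳 × Fin K) : ℕ :=
  ((T.filter fun i => (z i).2 = y).filter fun i => s ((z i).1, y) ≤ s ((z j).1, y)).card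

/-- the "bad" event: `j` has label `y` and its conformal p-value is at most `α`. -/
noncomputable def BadP (s : 𝒳 × Fin K → ℝ) (α : ℝ) (T : Finset (Fin N)) (y : Fin K)
    (j : Fin N) (z : Fin N → 𝒳 × Fin K) : Prop :=
  (z j).2 = y ∧ (rcnt s T y j z : ℝ) ≤ α * (mcnt T y z : ℝ)

noncomputable instance (s : 𝒳 × Fin K → ℝ) (α : ℝ) (T : Finset (Fin N)) (y : Fin K)
    (j : Fin N) (z : Fin N → 𝒳 × Fin K) : Decidable (BadP s α T y j z) := by
  unfold BadP; infer_instance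

lemma badcount_le (s : 𝒳 × Fin K → ℝ) (α : ℝ) (hα : 0 ≤ α)
    (T : Finset (Fin N)) (y : Fin K) (z : Fin N → 𝒳 × Fin K) :
    ((T.filter fun j => BadP s α T y j z).card : ℝ)
      ≤ α * ((T.filter fun j => (z j).2 = y).card : ℝ) := by
  have h1 : T.filter (fun j => BadP s α T y j z)
      = (T.filter fun j => (z j).2 = y).filter
          (fun j => (((T.filter fun i => (z i).2 = y).filter
              fun i => s ((z i).1, y) ≤ s ((z j).1, y)).card : ℝ)
            ≤ α * ((T.filter fun i => (z i).2 = y).card : ℝ)) := by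
    rw [Finset.filter_filter]
    apply Finset.filter_congr
    intro j _
    simp [BadP, rcnt, mcnt]
  rw [h1]
  exact rank_count_le_s15 _ (fun i => s ((z i).1, y)) _
    (mul_nonneg hα (Nat.cast_nonneg _))

lemma badP_swap (s : 𝒳 × Fin K → ℝ) (α : ℝ) (T : Finset (Fin N))
    (y : Fin K) {L j : Fin N} (hL : L ∈ T) (hj : j ∈ T) (z : Fin N → 𝒳 × Fin K) :
    BadP s α T y L (fun i => z (Equiv.swap L j i)) ↔ BadP s α T y j z := by
  set σ := Equiv.swap L j with hσ
  have hσT : ∀ i ∈ T, σ i ∈ T := by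
    intro i hi
    rcases eq_or_ne i L with rfl | h1
    · simpa [hσ] using hj
    rcases eq_or_ne i j with rfl | h2
    · simpa [hσ] using hL
    · simpa [hσ, Equiv.swap_apply_of_ne_of_ne h1 h2] using hi
  have hσT' : ∀ i ∈ T, σ.symm i ∈ T := by
    intro i hi
    simpa [hσ, Equiv.symm_swap] using hσT i hi
  have hσL : σ L = j := Equiv.swap_apply_left L j
  have hm : mcnt T y (fun i => z (σ i)) = mcnt T y z := by
    unfold mcnt
    exact filter_card_perm T σ hσT hσT' (fun i => (z i).2 = y)
  have hr : rcnt s T y L (fun i => z (σ i)) = rcnt s T y j z := by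
    unfold rcnt
    rw [Finset.filter_filter, Finset.filter_filter]
    simp only [hσL]
    exact filter_card_perm T σ hσT hσT'
      (fun i => (z i).2 = y ∧ s ((z i).1, y) ≤ s ((z j).1, y))
  unfold BadP
  rw [hm, hr]
  simp only [hσL]

lemma measurableSet_badP [MeasurableSpace 𝒳] (s : 𝒳 × Fin K → ℝ)
    (hs : Measurable s) (α : ℝ) (T : Finset (Fin N)) (y : Fin K) (j : Fin N) :
    MeasurableSet {z : Fin N → 𝒳 × Fin K | BadP s α T y j z} := by
  have hlab : ∀ i : Fin N, MeasurableSet {z : Fin N → 𝒳 × Fin K | (z i).2 = y} := fun i =>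
    (measurable_snd.comp (measurable_pi_apply i)) (measurableSet_singleton y)
  have hsc : ∀ i : Fin N, Measurable fun z : Fin N → 𝒳 × Fin K => s ((z i).1, y) := fun i =>
    hs.comp ((measurable_fst.comp (measurable_pi_apply i)).prodMk measurable_const)
  have hm : Measurable fun z : Fin N → 𝒳 × Fin K => ((mcnt T y z : ℝ)) := by
    unfold mcnt
    exact measurable_filter_card T _ hlab
  have hr : Measurable fun z : Fin N → 𝒳 × Fin K => ((rcnt s T y j z : ℝ)) := by
    unfold rcnt
    have heq : ∀ z : Fin N → 𝒳 × Fin K,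
        ((T.filter fun i => (z i).2 = y).filter
          fun i => s ((z i).1, y) ≤ s ((z j).1, y)).card
        = (T.filter fun i => (z i).2 = y ∧ s ((z i).1, y) ≤ s ((z j).1, y)).card := by
      intro z; rw [Finset.filter_filter]
    simp only [heq]
    exact measurable_filter_card T _ fun i =>
      (hlab i).inter (measurableSet_le (hsc i) (hsc j))
  have hset : {z : Fin N → 𝒳 × Fin K | BadP s α T y j z}
      = {z | (z j).2 = y} ∩ {z | (rcnt s T y j z : ℝ) ≤ α * (mcnt T y z : ℝ)} := rfl
  rw [hset]
  exact (hlab j).inter (measurableSet_le hr (measurable_const.mul hm))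

end Aux

/-- Theorem 2, Algorithm 2: class-specific conditional coverage of the
ordinal prediction set based on conditional conformal p-values,
`C(X_{2n+1}) = {y : p(X_{2n+1}|y) > α}`: for every label `y` with `P(Y_{2n+1} = y) > 0`,
`P(Y_{2n+1} ∈ C(X_{2n+1}) | Y_{2n+1} = y) ≥ 1 − α`. -/
theorem conditional_prediction_set_conditional_coverage
    {Ω : Type*} [MeasurableSpace Ω] (P : Measure Ω) [IsProbabilityMeasure P]
    {𝒳 : Type*} [MeasurableSpace 𝒳]
    (n K : ℕ) (hn : 1 ≤ n) (hK : 1 ≤ K)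
    (Z : Fin (2 * n + 1) → Ω → 𝒳 × Fin K)
    (hmeas : ∀ i, Measurable (Z i))
    (hexch : ∀ σ : Equiv.Perm (Fin (2 * n + 1)),
      Measure.map (fun ω i => Z (σ i) ω) P = Measure.map (fun ω i => Z i ω) P)
    (s : 𝒳 × Fin K → ℝ) (hs : Measurable s)
    (Dcal : Finset (Fin (2 * n + 1)))
    (hDcal : Dcal = Finset.univ.filter
      (fun i : Fin (2 * n + 1) => n ≤ (i : ℕ) ∧ (i : ℕ) < 2 * n))
    (Iy : Fin K → Ω → Finset (Fin (2 * n + 1)))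
    (hIy : ∀ y ω, Iy y ω = Dcal.filter (fun i => (Z i ω).2 = y))
    (p : Fin K → Ω → ℝ)
    (hp : ∀ y ω, p y ω =
      ((((Iy y ω).filter
          (fun i => s ((Z i ω).1, y) ≤ s ((Z (Fin.last (2 * n)) ω).1, y))).card : ℝ) + 1)
        / (((Iy y ω).card : ℝ) + 1))
    (α : ℝ) (hα : α ∈ Set.Ioo (0 : ℝ) 1)
    (y : Fin K) (hpos : 0 < P {ω | (Z (Fin.last (2 * n)) ω).2 = y}) :
    ENNReal.ofReal (1 - α) ≤
      P[|{ω | (Z (Fin.last (2 * n)) ω).2 = y}]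
        {ω | α < p ((Z (Fin.last (2 * n)) ω).2) ω} := by
  classical
  obtain ⟨hα0, hα1⟩ := hα
  set L : Fin (2 * n + 1) := Fin.last (2 * n) with hLdef
  set T : Finset (Fin (2 * n + 1)) := insert L Dcal with hTdef
  have hLT : L ∈ T := Finset.mem_insert_self _ _
  have hLD : L ∉ Dcal := by
    intro h
    rw [hDcal] at h
    have h2 := (Finset.mem_filter.mp h).2
    simp only [hLdef, Fin.val_last] at h2
    omega
  set Zv : Ω → (Fin (2 * n + 1) → 𝒳 × Fin K) := fun ω i => Z i ω with hZvdef
  have hZvm : Measurable Zv := measurable_pi_lambda _ hmeas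
  set E : Set Ω := {ω | (Z L ω).2 = y} with hEdef
  have hEm : MeasurableSet E := (measurable_snd.comp (hmeas L)) (measurableSet_singleton y)
  set B : Fin (2 * n + 1) → Set Ω := fun j => {ω | BadP s α T y j (Zv ω)} with hBdef
  have hBm : ∀ j, MeasurableSet (B j) := fun j => hZvm (measurableSet_badP s hs α T y j)
  set E' : Fin (2 * n + 1) → Set Ω := fun j => {ω | (Z j ω).2 = y} with hE'def
  have hE'm : ∀ j, MeasurableSet (E' j) := fun j =>
    (measurable_snd.comp (hmeas j)) (measurableSet_singleton y)
  -- exchangeability at the level of measurable sets of configurations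
  have hmap : ∀ (σ : Equiv.Perm (Fin (2 * n + 1))) (S : Set (Fin (2 * n + 1) → 𝒳 × Fin K)),
      MeasurableSet S → P ((fun ω i => Z (σ i) ω) ⁻¹' S) = P (Zv ⁻¹' S) := by
    intro σ S hS
    have h1 : Measurable fun ω i => Z (σ i) ω := measurable_pi_lambda _ fun i => hmeas (σ i)
    have h2 := hexch σ
    calc P ((fun ω i => Z (σ i) ω) ⁻¹' S)
        = Measure.map (fun ω i => Z (σ i) ω) P S := (Measure.map_apply h1 hS).symm
      _ = Measure.map Zv P S := by rw [h2]
      _ = P (Zv ⁻¹' S) := Measure.map_apply hZvm hS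
  have hPB : ∀ j ∈ T, P (B j) = P (B L) := by
    intro j hjT
    have h := hmap (Equiv.swap L j) {z | BadP s α T y L z} (measurableSet_badP s hs α T y L)
    have hset : ((fun ω i => Z ((Equiv.swap L j) i) ω) ⁻¹' {z | BadP s α T y L z}) = B j := by
      ext ω
      simp only [Set.mem_preimage, Set.mem_setOf_eq, hBdef]
      exact badP_swap s α T y hLT hjT (Zv ω)
    rw [hset] at h
    exact h
  have hPE : ∀ j ∈ T, P (E' j) = P E := by
    intro j hjT
    have h := hmap (Equiv.swap L j) {z | (z L).2 = y}
      ((measurable_snd.comp (measurable_pi_apply L)) (measurableSet_singleton y))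
    have hset : ((fun ω i => Z ((Equiv.swap L j) i) ω) ⁻¹' {z | (z L).2 = y}) = E' j := by
      ext ω
      simp [Equiv.swap_apply_left, hE'def]
    rw [hset] at h
    exact h
  -- pointwise count inequality
  have hpoint : ∀ ω, (∑ j ∈ T, (B j).indicator (1 : Ω → ℝ≥0∞) ω)
      ≤ ENNReal.ofReal α * ∑ j ∈ T, (E' j).indicator (1 : Ω → ℝ≥0∞) ω := by
    intro ω
    have h1 : (∑ j ∈ T, (B j).indicator (1 : Ω → ℝ≥0∞) ω)
        = ((T.filter fun j => BadP s α T y j (Zv ω)).card : ℝ≥0∞) := by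
      rw [Finset.card_filter]
      push_cast
      refine Finset.sum_congr rfl fun j _ => ?_
      by_cases h : BadP s α T y j (Zv ω) <;> simp [hBdef, Set.indicator_apply, h]
    have h2 : (∑ j ∈ T, (E' j).indicator (1 : Ω → ℝ≥0∞) ω)
        = ((T.filter fun j => (Zv ω j).2 = y).card : ℝ≥0∞) := by
      rw [Finset.card_filter]
      push_cast
      refine Finset.sum_congr rfl fun j _ => ?_
      by_cases h : (Zv ω j).2 = y <;> simp [hE'def, Set.indicator_apply, h, hZvdef]
    rw [h1, h2]
    have h3 := badcount_le s α (le_of_lt hα0) T y (Zv ω)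
    calc ((T.filter fun j => BadP s α T y j (Zv ω)).card : ℝ≥0∞)
        = ENNReal.ofReal ((T.filter fun j => BadP s α T y j (Zv ω)).card : ℝ) :=
          (ENNReal.ofReal_natCast _).symm
      _ ≤ ENNReal.ofReal (α * ((T.filter fun j => (Zv ω j).2 = y).card : ℝ)) :=
          ENNReal.ofReal_le_ofReal h3
      _ = ENNReal.ofReal α * ENNReal.ofReal ((T.filter fun j => (Zv ω j).2 = y).card : ℝ) :=
          ENNReal.ofReal_mul (le_of_lt hα0)
      _ = ENNReal.ofReal α * ((T.filter fun j => (Zv ω j).2 = y).card : ℝ≥0∞) := by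
          rw [ENNReal.ofReal_natCast]
  have hBind : ∀ j, Measurable ((B j).indicator (1 : Ω → ℝ≥0∞)) := fun j =>
    measurable_const.indicator (hBm j)
  have hEind : ∀ j, Measurable ((E' j).indicator (1 : Ω → ℝ≥0∞)) := fun j =>
    measurable_const.indicator (hE'm j)
  have hmain : (T.card : ℝ≥0∞) * P (B L) ≤ ENNReal.ofReal α * ((T.card : ℝ≥0∞) * P E) := by
    calc (T.card : ℝ≥0∞) * P (B L)
        = ∑ j ∈ T, P (B j) := by
          rw [Finset.sum_congr rfl hPB, Finset.sum_const, nsmul_eq_mul]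
      _ = ∑ j ∈ T, ∫⁻ ω, (B j).indicator 1 ω ∂P := by
          refine Finset.sum_congr rfl fun j _ => ?_
          rw [lintegral_indicator_one (hBm j)]
      _ = ∫⁻ ω, ∑ j ∈ T, (B j).indicator 1 ω ∂P :=
          (lintegral_finset_sum T fun j _ => hBind j).symm
      _ ≤ ∫⁻ ω, ENNReal.ofReal α * ∑ j ∈ T, (E' j).indicator 1 ω ∂P :=
          lintegral_mono hpoint
      _ = ENNReal.ofReal α * ∫⁻ ω, ∑ j ∈ T, (E' j).indicator 1 ω ∂P :=
          lintegral_const_mul _ (Finset.measurable_sum T fun j _ => hEind j)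
      _ = ENNReal.ofReal α * ∑ j ∈ T, ∫⁻ ω, (E' j).indicator 1 ω ∂P := by
          rw [lintegral_finset_sum T fun j _ => hEind j]
      _ = ENNReal.ofReal α * ∑ j ∈ T, P (E' j) := by
          congr 1
          exact Finset.sum_congr rfl fun j _ => lintegral_indicator_one (hE'm j)
      _ = ENNReal.ofReal α * ((T.card : ℝ≥0∞) * P E) := by
          rw [Finset.sum_congr rfl hPE, Finset.sum_const, nsmul_eq_mul]
  have hcard0 : (T.card : ℝ≥0∞) ≠ 0 :=
    Nat.cast_ne_zero.mpr (Finset.card_ne_zero_of_mem hLT)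
  have hBle : P (B L) ≤ ENNReal.ofReal α * P E := by
    rw [← mul_assoc, mul_comm (ENNReal.ofReal α) ((T.card : ℝ≥0∞)), mul_assoc] at hmain
    exact (ENNReal.mul_le_mul_iff_right hcard0 (ENNReal.natCast_ne_top _)).mp hmain
  -- identify the bad event on E with { p ≤ α }
  have hiff : ∀ ω, (Z L ω).2 = y → (BadP s α T y L (Zv ω) ↔ p y ω ≤ α) := by
    intro ω hyy
    have hIL : L ∉ Iy y ω := by
      rw [hIy]; intro h; exact hLD (Finset.mem_filter.mp h).1
    have hfil : T.filter (fun i => (Zv ω i).2 = y) = insert L (Iy y ω) := by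
      rw [hTdef, Finset.filter_insert, if_pos hyy, hIy]
    have hmval : (mcnt T y (Zv ω) : ℝ) = ((Iy y ω).card : ℝ) + 1 := by
      unfold mcnt
      rw [hfil, Finset.card_insert_of_notMem hIL]
      push_cast; ring
    have hrval : (rcnt s T y L (Zv ω) : ℝ)
        = (((Iy y ω).filter
            fun i => s ((Z i ω).1, y) ≤ s ((Z L ω).1, y)).card : ℝ) + 1 := by
      unfold rcnt
      rw [hfil, Finset.filter_insert, if_pos le_rfl,
        Finset.card_insert_of_notMem (fun h => hIL (Finset.mem_filter.mp h).1)]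
      push_cast; ring
    have hmpos : (0 : ℝ) < (mcnt T y (Zv ω) : ℝ) := by
      rw [hmval]; positivity
    have hpeq : p y ω = (rcnt s T y L (Zv ω) : ℝ) / (mcnt T y (Zv ω) : ℝ) := by
      rw [hp y ω, hrval, hmval]
    unfold BadP
    constructor
    · rintro ⟨-, h2⟩
      rw [hpeq]
      exact (div_le_iff₀ hmpos).mpr h2
    · intro h
      refine ⟨hyy, ?_⟩
      rw [hpeq] at h
      exact (div_le_iff₀ hmpos).mp h
  have hBsubE : B L ⊆ E := fun ω hω => hω.1
  have hEdiff : E ∩ {ω | α < p ((Z L ω).2) ω} = E \ B L := by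
    ext ω
    simp only [Set.mem_inter_iff, Set.mem_diff, Set.mem_setOf_eq, hBdef, hEdef]
    constructor
    · rintro ⟨hy, hlt⟩
      refine ⟨hy, fun hbad => ?_⟩
      rw [hy] at hlt
      exact absurd ((hiff ω hy).mp hbad) (not_le.mpr hlt)
    · rintro ⟨hy, hnb⟩
      refine ⟨hy, ?_⟩
      rw [hy]
      by_contra hle
      exact hnb ((hiff ω hy).mpr (not_lt.mp hle))
  have hPE0 : P E ≠ 0 := ne_of_gt hpos
  have hPEtop : P E ≠ ⊤ := measure_ne_top P E
  have hsplit : ENNReal.ofReal (1 - α) * P E ≤ P (E ∩ {ω | α < p ((Z L ω).2) ω}) := by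
    rw [hEdiff, measure_diff hBsubE (hBm L).nullMeasurableSet (measure_ne_top P _)]
    have hadd : ENNReal.ofReal (1 - α) * P E + ENNReal.ofReal α * P E = P E := by
      rw [← add_mul, ← ENNReal.ofReal_add (by linarith) (le_of_lt hα0)]
      norm_num
    calc ENNReal.ofReal (1 - α) * P E = P E - ENNReal.ofReal α * P E :=
          ENNReal.eq_sub_of_add_eq (by finiteness) hadd
      _ ≤ P E - P (B L) := tsub_le_tsub_left hBle _
  rw [cond_apply hEm P]
  calc ENNReal.ofReal (1 - α)
      = (P E)⁻¹ * (ENNReal.ofReal (1 - α) * P E) := by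
        rw [mul_comm (ENNReal.ofReal (1 - α)) (P E), ← mul_assoc,
          ENNReal.inv_mul_cancel hPE0 hPEtop, one_mul]
    _ ≤ (P E)⁻¹ * P (E ∩ {ω | α < p ((Z L ω).2) ω}) := mul_le_mul_right hsplit _
end

section
/- Let n ≥ 1, let 𝒴 = {1, ..., K} with K ≥ 1, and let (X_i, Y_i), i = n+1, ..., 2n+1, be random variables with values in 𝒳 × 𝒴 whose joint distribution is exchangeable. Fix a measurable score function s : 𝒳 × 𝒴 → ℝ and define p(X_{2n+1}, y) = (Σ_{i=n+1}^{2n} 1{s(X_i, Y_i) ≤ s(X_{2n+1}, y)} + 1)/(n+1) for each y ∈ 𝒴. Fix α ∈ (0,1). Then the step-up procedure that tests H_K, H_{K−1}, ..., H_1 sequentially, rejecting H_i if p(X_{2n+1}, i) ≤ α and stopping at the first non-rejection (Procedure 2), satisfies FWER = P(reject H_{Y_{2n+1}}) ≤ α. -/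
open MeasureTheory ProbabilityTheory
open scoped ENNReal

/-- Proposition 3, Procedure 2: for exchangeable pairs
`(X_i, Y_i)`, `i = n+1, ..., 2n+1` (indexed by `Fin (n+1)`, the last index being the test
point) with labels in `𝒴 = Fin K`, the sequential procedure testing `H_K, ..., H_1` in
decreasing order (rejecting `H_i` iff `p(X_{2n+1}, i) ≤ α`, stopping at the first
non-rejection) controls the FWER: the true hypothesis `H_{Y_{2n+1}}` is rejected (i.e.
`p(X_{2n+1}, i) ≤ α` for all `i ≥ Y_{2n+1}`) with probability at most `α`. -/
theorem procedure2_fwer_control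
    {Ω : Type*} [MeasurableSpace Ω] (P : Measure Ω) [IsProbabilityMeasure P]
    {𝒳 : Type*} [MeasurableSpace 𝒳]
    (n K : ℕ) (hn : 1 ≤ n) (hK : 1 ≤ K)
    (Z : Fin (n + 1) → Ω → 𝒳 × Fin K)
    (hmeas : ∀ i, Measurable (Z i))
    (hexch : ∀ σ : Equiv.Perm (Fin (n + 1)),
      Measure.map (fun ω i => Z (σ i) ω) P = Measure.map (fun ω i => Z i ω) P)
    (s : 𝒳 × Fin K → ℝ) (hs : Measurable s)
    (p : Ω → Fin K → ℝ)
    (hp : ∀ ω y, p ω y =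
      (((Finset.univ.filter
          (fun i : Fin n => s (Z i.castSucc ω) ≤ s ((Z (Fin.last n) ω).1, y))).card : ℝ) + 1)
        / (n + 1))
    (α : ℝ) (hα : α ∈ Set.Ioo (0 : ℝ) 1) :
    P {ω | ∀ i : Fin K, (Z (Fin.last n) ω).2 ≤ i → p ω i ≤ α} ≤ ENNReal.ofReal α := by
  classical
  obtain ⟨hα0, hα1⟩ := hα
  set m := Nat.floor (α * ((n : ℝ) + 1)) with hmdef
  set Zvec : Ω → (Fin (n + 1) → 𝒳 × Fin K) := fun ω i => Z i ω with hZvec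
  have hZvecMeas : Measurable Zvec := measurable_pi_lambda _ hmeas
  set A : Fin (n + 1) → Set (Fin (n + 1) → 𝒳 × Fin K) :=
    fun j => {z | (Finset.univ.filter (fun i => s (z i) ≤ s (z j))).card ≤ m} with hA
  have hAmeas : ∀ j, MeasurableSet (A j) := by
    intro j
    have hf : Measurable (fun z : Fin (n + 1) → 𝒳 × Fin K =>
        (Finset.univ.filter (fun i => s (z i) ≤ s (z j))).card) := by
      simp only [Finset.card_filter]
      apply Finset.measurable_sum
      intro i _
      have hms : MeasurableSet {z : Fin (n + 1) → 𝒳 × Fin K | s (z i) ≤ s (z j)} :=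
        measurableSet_le (hs.comp (measurable_pi_apply i)) (hs.comp (measurable_pi_apply j))
      exact Measurable.ite hms measurable_const measurable_const
    exact hf (measurableSet_Iic : MeasurableSet (Set.Iic m))
  -- pointwise bound on the number of "small rank" indices
  have hAcount : ∀ z, (Finset.univ.filter (fun j => z ∈ A j)).card ≤ m := by
    intro z
    by_cases hS : (Finset.univ.filter (fun j => z ∈ A j)).Nonempty
    · obtain ⟨j₀, hj₀, hmax⟩ := Finset.exists_max_image _ (fun j => s (z j)) hS
      have hj₀A : z ∈ A j₀ := (Finset.mem_filter.mp hj₀).2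
      calc (Finset.univ.filter (fun j => z ∈ A j)).card
          ≤ (Finset.univ.filter (fun i => s (z i) ≤ s (z j₀))).card := by
            apply Finset.card_le_card
            intro j hj
            exact Finset.mem_filter.mpr ⟨Finset.mem_univ _, hmax j hj⟩
        _ ≤ m := hj₀A
    · rw [Finset.not_nonempty_iff_eq_empty] at hS
      simp [hS]
  -- all events have the same probability
  have hAeq : ∀ j, P (Zvec ⁻¹' A j) = P (Zvec ⁻¹' A (Fin.last n)) := by
    intro j
    set σ := Equiv.swap j (Fin.last n) with hσ
    set g : (Fin (n + 1) → 𝒳 × Fin K) → (Fin (n + 1) → 𝒳 × Fin K) :=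
      fun z i => z (σ i) with hg
    have hgMeas : Measurable g :=
      measurable_pi_lambda _ (fun i => measurable_pi_apply (σ i))
    have hpre : A j = g ⁻¹' A (Fin.last n) := by
      ext z
      simp only [hA, hg, Set.mem_setOf_eq, Set.mem_preimage]
      have h1 : σ (Fin.last n) = j := Equiv.swap_apply_right _ _
      have h2 : (Finset.univ.filter (fun i => s (z (σ i)) ≤ s (z (σ (Fin.last n))))).card
          = (Finset.univ.filter (fun i => s (z i) ≤ s (z j))).card := by
        simp only [h1, Finset.card_filter]
        exact Equiv.sum_comp σ (fun i => if s (z i) ≤ s (z j) then 1 else 0)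
      rw [h2]
    have hcomp : g ∘ Zvec = fun ω i => Z (σ i) ω := rfl
    calc P (Zvec ⁻¹' A j)
        = P ((g ∘ Zvec) ⁻¹' A (Fin.last n)) := by rw [hpre, Set.preimage_comp]
      _ = Measure.map (g ∘ Zvec) P (A (Fin.last n)) :=
          (Measure.map_apply (hgMeas.comp hZvecMeas) (hAmeas _)).symm
      _ = Measure.map Zvec P (A (Fin.last n)) := by rw [hcomp, hexch σ]
      _ = P (Zvec ⁻¹' A (Fin.last n)) := Measure.map_apply hZvecMeas (hAmeas _)
  -- sum bound
  have hsum : ((n : ℝ≥0∞) + 1) * P (Zvec ⁻¹' A (Fin.last n)) ≤ (m : ℝ≥0∞) := by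
    have h1 : ∑ j : Fin (n + 1), P (Zvec ⁻¹' A j)
        = ((n : ℝ≥0∞) + 1) * P (Zvec ⁻¹' A (Fin.last n)) := by
      rw [Finset.sum_congr rfl (fun j _ => hAeq j), Finset.sum_const, Finset.card_univ,
        Fintype.card_fin, nsmul_eq_mul]
      push_cast
      ring
    rw [← h1]
    calc ∑ j : Fin (n + 1), P (Zvec ⁻¹' A j)
        = ∫⁻ ω, ∑ j : Fin (n + 1),
            (Zvec ⁻¹' A j).indicator (fun _ => (1 : ℝ≥0∞)) ω ∂P := by
          rw [lintegral_finset_sum]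
          · exact Finset.sum_congr rfl
              (fun j _ => (lintegral_indicator_one (hZvecMeas (hAmeas j))).symm)
          · exact fun j _ => Measurable.indicator measurable_const (hZvecMeas (hAmeas j))
      _ ≤ ∫⁻ _, (m : ℝ≥0∞) ∂P := by
          apply lintegral_mono
          intro ω
          have h2 : ∑ j : Fin (n + 1), (Zvec ⁻¹' A j).indicator (fun _ => (1 : ℝ≥0∞)) ω
              = ((Finset.univ.filter (fun j => Zvec ω ∈ A j)).card : ℝ≥0∞) := by
            simp only [Set.indicator_apply, Set.mem_preimage]
            rw [Finset.sum_boole]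
          dsimp only
          rw [h2]
          exact_mod_cast Nat.cast_le.mpr (hAcount (Zvec ω))
      _ = (m : ℝ≥0∞) := by simp
  -- conclude the probability bound
  have hPE : P (Zvec ⁻¹' A (Fin.last n)) ≤ ENNReal.ofReal α := by
    have hfloor : (m : ℝ≥0∞) ≤ ((n : ℝ≥0∞) + 1) * ENNReal.ofReal α := by
      have h0 : (m : ℝ) ≤ α * ((n : ℝ) + 1) := Nat.floor_le (by positivity)
      calc (m : ℝ≥0∞) = ENNReal.ofReal (m : ℝ) := by simp
        _ ≤ ENNReal.ofReal (α * ((n : ℝ) + 1)) := ENNReal.ofReal_le_ofReal h0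
        _ = ENNReal.ofReal ((n : ℝ) + 1) * ENNReal.ofReal α := by
            rw [ENNReal.ofReal_mul (le_of_lt hα0), mul_comm]
        _ = ((n : ℝ≥0∞) + 1) * ENNReal.ofReal α := by
            congr 1
            rw [ENNReal.ofReal_add (by positivity) zero_le_one]
            simp
    have hle : ((n : ℝ≥0∞) + 1) * P (Zvec ⁻¹' A (Fin.last n))
        ≤ ((n : ℝ≥0∞) + 1) * ENNReal.ofReal α := le_trans hsum hfloor
    have hne : ((n : ℝ≥0∞) + 1) ≠ 0 := (zero_lt_one.trans_le le_add_self).ne'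
    have hnt : ((n : ℝ≥0∞) + 1) ≠ ⊤ := by
      simp [ENNReal.add_ne_top]
    exact (ENNReal.mul_le_mul_iff_right hne hnt).mp hle
  refine le_trans (measure_mono ?_) hPE
  intro ω hω
  have hY := hω ((Z (Fin.last n) ω).2) le_rfl
  rw [hp] at hY
  set c := (Finset.univ.filter
      (fun i : Fin n => s (Z i.castSucc ω)
        ≤ s ((Z (Fin.last n) ω).1, (Z (Fin.last n) ω).2))).card with hc
  have hnpos : (0 : ℝ) < (n : ℝ) + 1 := by positivity
  have h1 : (c : ℝ) + 1 ≤ α * ((n : ℝ) + 1) := by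
    rw [div_le_iff₀ hnpos] at hY
    linarith
  have h2 : c + 1 ≤ m := by
    apply Nat.le_floor
    push_cast
    exact h1
  show Zvec ω ∈ A (Fin.last n)
  simp only [hA, Set.mem_setOf_eq]
  have hcard : (Finset.univ.filter
      (fun i : Fin (n + 1) => s (Zvec ω i) ≤ s (Zvec ω (Fin.last n)))).card = c + 1 := by
    simp only [Finset.card_filter]
    rw [Fin.sum_univ_castSucc]
    have hlast : (if s (Zvec ω (Fin.last n)) ≤ s (Zvec ω (Fin.last n)) then 1 else 0) = 1 :=
      if_pos le_rfl
    rw [hlast, hc, Finset.card_filter]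
  rw [hcard]
  exact h2
end
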